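/- arXiv:1312.5141 — 8 statements merged into one kernel-verified Lean document; each statement's English description precedes it below -/
import Mathlib

section
/- If G is a topological group that is k-Steinhaus for some k ≥ 1 (i.e., for every symmetric countably syndetic set S ⊆ G, the set S^k contains a nonempty open set), then every group homomorphism from G to a separable topological group H is continuous. -/
/-!
Fix a neighbourhood `W` of `1` in `H` and an open `V ∋ 1` with `(V V⁻¹)^(2k) ⊆ W`. For a dense
sequence `(dₙ)` of `H` the translates `dₙ V⁻¹` cover `H`; choosing `aₙ ∈ G` with `φ aₙ ∈ dₙ V⁻¹`
whenever possible shows that the symmetric set `S = φ⁻¹(V V⁻¹)` is countably syndetic. Hence `S^k`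
contains a nonempty open `U`, and for `u ∈ U` the neighbourhood `u⁻¹U` of `1` lies in
`S^(2k) ⊆ φ⁻¹(W)`.
-/

open Pointwise Filter Topology Set TopologicalSpace

theorem exists_open_nhds_one_pow_subset {M : Type*} [Monoid M] [TopologicalSpace M]
    [ContinuousMul M] {W : Set M} (hW : W ∈ 𝓝 (1 : M)) (n : ℕ) :
    ∃ V : Set M, IsOpen V ∧ (1 : M) ∈ V ∧ V ^ n ⊆ W := by
  induction n generalizing W with
  | zero => exact ⟨univ, isOpen_univ, trivial, by simpa using mem_of_mem_nhds hW⟩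
  | succ n ih =>
    obtain ⟨U, hUo, hU1, hUW⟩ := exists_open_nhds_one_mul_subset hW
    obtain ⟨V, hVo, hV1, hVU⟩ := ih (hUo.mem_nhds hU1)
    refine ⟨V ∩ U, hVo.inter hUo, ⟨hV1, hU1⟩, ?_⟩
    calc (V ∩ U) ^ (n + 1) = (V ∩ U) ^ n * (V ∩ U) := pow_succ _ _
      _ ⊆ V ^ n * U := by gcongr <;> simp
      _ ⊆ U * U := by gcongr
      _ ⊆ W := hUW

theorem TopologicalSpace.SeparableSpace.exists_seq_inv_mul_mem_mul_inv {X H : Type*}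
    [Nonempty X] [Group H] [TopologicalSpace H] [ContinuousMul H] [SeparableSpace H]
    {V : Set H} (hVo : IsOpen V) (hV : V.Nonempty) (f : X → H) :
    ∃ a : ℕ → X, ∀ x, ∃ n, (f (a n))⁻¹ * f x ∈ V * V⁻¹ := by
  refine ⟨fun n => Classical.epsilon fun y => (f y)⁻¹ * denseSeq H n ∈ V, fun x => ?_⟩
  obtain ⟨n, hn⟩ := (denseRange_denseSeq H).exists_mem_open (hVo.smul (f x)) hV.smul_set
  rw [mem_smul_set_iff_inv_smul_mem, smul_eq_mul] at hn
  have ha := Classical.epsilon_spec (p := fun y => (f y)⁻¹ * denseSeq H n ∈ V) ⟨x, hn⟩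
  exact ⟨n, by simpa [mul_assoc] using mul_mem_mul ha (inv_mem_inv.2 hn)⟩

theorem MonoidHom.inv_preimage {G H : Type*} [Group G] [Group H] (φ : G →* H) (s : Set H) :
    (φ ⁻¹' s)⁻¹ = φ ⁻¹' s⁻¹ := by
  ext
  simp

section TopologicalGroup

variable {G : Type*} [Group G] [TopologicalSpace G] [IsTopologicalGroup G]

theorem exists_open_nhds_one_mul_inv_pow_subset {W : Set G} (hW : W ∈ 𝓝 (1 : G)) (n : ℕ) :
    ∃ V : Set G, IsOpen V ∧ (1 : G) ∈ V ∧ (V * V⁻¹) ^ n ⊆ W := by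
  obtain ⟨U, hUo, hU1, hUW⟩ := exists_open_nhds_one_pow_subset hW (2 * n)
  refine ⟨U ∩ U⁻¹, hUo.inter hUo.inv, ⟨hU1, by simpa using hU1⟩, ?_⟩
  calc (U ∩ U⁻¹ * (U ∩ U⁻¹)⁻¹) ^ n ⊆ (U * U) ^ n := by
        rw [inter_inv, inv_inv]
        gcongr <;> simp
    _ = U ^ (2 * n) := by rw [← sq, ← pow_mul]
    _ ⊆ W := hUW

theorem pow_two_mul_mem_nhds_one_of_subset_pow {S U : Set G} {k : ℕ} (hS : S⁻¹ = S)
    (hUo : IsOpen U) (hU : U.Nonempty) (hUS : U ⊆ S ^ k) : S ^ (2 * k) ∈ 𝓝 (1 : G) := by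
  obtain ⟨u, hu⟩ := hU
  have hu_inv : u⁻¹ ∈ S ^ k := by
    rw [← hS, inv_pow]
    exact inv_mem_inv.2 (hUS hu)
  refine mem_of_superset ((hUo.smul u⁻¹).mem_nhds ⟨u, hu, inv_mul_cancel u⟩) ?_
  calc u⁻¹ • U ⊆ S ^ k * S ^ k := (smul_set_subset_mul hu_inv).trans (by gcongr)
    _ = S ^ (2 * k) := by rw [two_mul, pow_add]

end TopologicalGroup

theorem steinhaus_automatic_continuity_general {G H : Type*} [Group G] [TopologicalSpace G]
    [IsTopologicalGroup G] [Group H] [TopologicalSpace H] [IsTopologicalGroup H]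
    [TopologicalSpace.SeparableSpace H]
    (k : ℕ)
    (hSteinhaus : ∀ S : Set G, S⁻¹ = S →
      (∃ a : ℕ → G, ∀ g : G, ∃ n, g ∈ a n • S) →
      ∃ U : Set G, IsOpen U ∧ U.Nonempty ∧ U ⊆ S ^ k)
    (φ : G →* H) : Continuous φ := by
  refine continuous_of_continuousAt_one φ fun W hW => ?_
  rw [map_one] at hW
  obtain ⟨V, hVo, hV1, hVW⟩ := exists_open_nhds_one_mul_inv_pow_subset hW (2 * k)
  have hS_symm : (φ ⁻¹' (V * V⁻¹))⁻¹ = φ ⁻¹' (V * V⁻¹) := by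
    rw [φ.inv_preimage, mul_inv_rev, inv_inv]
  have hS_syndetic : ∃ a : ℕ → G, ∀ g, ∃ n, g ∈ a n • φ ⁻¹' (V * V⁻¹) := by
    obtain ⟨a, ha⟩ := SeparableSpace.exists_seq_inv_mul_mem_mul_inv hVo ⟨1, hV1⟩ φ
    refine ⟨a, fun g => (ha g).imp fun n hn => ?_⟩
    rwa [mem_smul_set_iff_inv_smul_mem, smul_eq_mul, mem_preimage, map_mul, map_inv]
  obtain ⟨U, hUo, hU, hUS⟩ := hSteinhaus _ hS_symm hS_syndetic
  have hS_pow : (φ ⁻¹' (V * V⁻¹)) ^ (2 * k) ∈ 𝓝 1 :=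
    pow_two_mul_mem_nhds_one_of_subset_pow hS_symm hUo hU hUS
  exact mem_map.2 <| mem_of_superset hS_pow ((preimage_pow_subset φ _ _).trans (preimage_mono hVW))

/-- A topological group that is `k`-Steinhaus for some `k ≥ 1` has the automatic
continuity property: every homomorphism into a separable topological group is continuous. -/
theorem steinhaus_automatic_continuity {G H : Type*} [Group G] [TopologicalSpace G]
    [IsTopologicalGroup G] [Group H] [TopologicalSpace H] [IsTopologicalGroup H]
    [TopologicalSpace.SeparableSpace H]
    (k : ℕ) (hk : 1 ≤ k)
    (hSteinhaus : ∀ S : Set G, S⁻¹ = S →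
      (∃ a : ℕ → G, ∀ g : G, ∃ n, g ∈ a n • S) →
      ∃ U : Set G, IsOpen U ∧ U.Nonempty ∧ U ⊆ S ^ k)
    (φ : G →* H) : Continuous φ :=
  steinhaus_automatic_continuity_general k hSteinhaus φ
end

section
/- If W is a symmetric countably syndetic subset of a topological group G, S is a countable subset of G such that G = ⋃_{g∈S} gW, and G₀ is a dense subgroup of G closed under each g ∈ S, then the set W₀ = {g ∈ G₀ : g ∈ W} is symmetric and countably syndetic in G₀. -/
open Pointwise

def IsCountablySyndetic {α : Type*} [Mul α] (W : Set α) : Prop :=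
  ∃ a : ℕ → α, ∀ g, ∃ n, g ∈ a n • W

theorem isCountablySyndetic_of_countable_cover {α : Type*} [Mul α] [Nonempty α] {S W : Set α}
    (hS : S.Countable) (hcover : ∀ g, ∃ s ∈ S, g ∈ s • W) : IsCountablySyndetic W := by
  obtain ⟨s₀, hs₀, -⟩ := hcover (Classical.arbitrary α)
  obtain ⟨a, rfl⟩ := hS.exists_eq_range ⟨s₀, hs₀⟩
  refine ⟨a, fun g => ?_⟩
  obtain ⟨_, ⟨n, rfl⟩, hg⟩ := hcover g
  exact ⟨n, hg⟩

theorem MonoidHom.preimage_inv {G H : Type*} [Group G] [Group H] (f : G →* H) (W : Set H) :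
    (f ⁻¹' W)⁻¹ = f ⁻¹' W⁻¹ := by
  ext x
  simp

theorem MonoidHom.preimage_map_smul_set {G H : Type*} [Group G] [Group H] (f : G →* H) (a : G)
    (W : Set H) : f ⁻¹' (f a • W) = a • f ⁻¹' W := by
  ext x
  simp [Set.mem_smul_set_iff_inv_smul_mem]

theorem MonoidHom.exists_mem_preimage_smul_preimage {G H : Type*} [Group G] [Group H]
    (f : G →* H) {S W : Set H} (hcover : ∀ h, ∃ s ∈ S, h ∈ s • W) (hS : S ⊆ Set.range f) (g : G) :
    ∃ t ∈ f ⁻¹' S, g ∈ t • f ⁻¹' W := by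
  obtain ⟨s, hsS, hg⟩ := hcover (f g)
  obtain ⟨t, rfl⟩ := hS hsS
  exact ⟨t, hsS, f.preimage_map_smul_set t W ▸ hg⟩

theorem trace_symmetric_countably_syndetic_general {G : Type*} [Group G]
    (W : Set G) (hWsymm : W⁻¹ = W)
    (S : Set G) (hScount : S.Countable)
    (hcover : ∀ g : G, ∃ s ∈ S, g ∈ s • W)
    (G₀ : Subgroup G)
    (hclosed : S ⊆ (G₀ : Set G)) :
    (({g : G₀ | (g : G) ∈ W})⁻¹ = {g : G₀ | (g : G) ∈ W}) ∧
    ∃ a : ℕ → G₀, ∀ g : G₀, ∃ n, g ∈ a n • {g : G₀ | (g : G) ∈ W} := by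
  refine ⟨(G₀.subtype.preimage_inv W).trans (by rw [hWsymm]; rfl), ?_⟩
  have hS : S ⊆ Set.range G₀.subtype := by simpa using hclosed
  exact isCountablySyndetic_of_countable_cover (hScount.preimage Subtype.val_injective)
    (G₀.subtype.exists_mem_preimage_smul_preimage hcover hS)

/-- If `W` is a symmetric countably syndetic subset of a topological group `G`,
witnessed by the countable set `S` of translating elements, and `G₀` is a dense
subgroup containing `S`, then `W₀ = {g ∈ G₀ : g ∈ W}` is symmetric and countably
syndetic in `G₀`. -/
theorem trace_symmetric_countably_syndetic {G : Type*} [Group G] [TopologicalSpace G]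
    [IsTopologicalGroup G]
    (W : Set G) (hWsymm : W⁻¹ = W)
    (S : Set G) (hScount : S.Countable)
    (hcover : ∀ g : G, ∃ s ∈ S, g ∈ s • W)
    (G₀ : Subgroup G) (hdense : Dense (G₀ : Set G))
    (hclosed : S ⊆ (G₀ : Set G)) :
    (({g : G₀ | (g : G) ∈ W})⁻¹ = {g : G₀ | (g : G) ∈ W}) ∧
    ∃ a : ℕ → G₀, ∀ g : G₀, ∃ n, g ∈ a n • {g : G₀ | (g : G) ∈ W} :=
  trace_symmetric_countably_syndetic_general W hWsymm S hScount hcover G₀ hclosed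
end

section
/- Any isometry between compact subsets of the Urysohn space extends to a (surjective) isometry of the whole Urysohn space. -/
open Filter Topology

namespace HuhAux

variable {U : Type} [MetricSpace U]

/-- Cross distance between an "old" point `c` of `U` and a "new" abstract copy of `b ∈ B`. -/
noncomputable def cd (B : Finset U) (hB : B.Nonempty) (τ : U → U) (r : U → ℝ) (c b : U) : ℝ :=
  B.inf' hB fun a => dist c (τ a) + r a + dist a b

lemma cd_le {B : Finset U} (hB : B.Nonempty) (τ : U → U) (r : U → ℝ) (c b : U)
    {a : U} (ha : a ∈ B) : cd B hB τ r c b ≤ dist c (τ a) + r a + dist a b :=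
  Finset.inf'_le _ ha

lemma cd_pos {B : Finset U} (hB : B.Nonempty) (τ : U → U) (r : U → ℝ)
    (hr : ∀ a ∈ B, 0 < r a) (c b : U) : 0 < cd B hB τ r c b := by
  rw [cd, Finset.lt_inf'_iff]
  intro a ha
  have h1 := hr a ha
  have h2 := dist_nonneg (x := c) (y := τ a)
  have h3 := dist_nonneg (x := a) (y := b)
  linarith

lemma cd_exists {B : Finset U} (hB : B.Nonempty) (τ : U → U) (r : U → ℝ) (c b : U) :
    ∃ a ∈ B, cd B hB τ r c b = dist c (τ a) + r a + dist a b :=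
  Finset.exists_mem_eq_inf' hB _

lemma cd_le_left {B : Finset U} (hB : B.Nonempty) (τ : U → U) (r : U → ℝ) (c c' b : U) :
    cd B hB τ r c b ≤ dist c c' + cd B hB τ r c' b := by
  obtain ⟨a, ha, hEq⟩ := cd_exists hB τ r c' b
  have h1 := cd_le hB τ r c b ha
  have h2 := dist_triangle c c' (τ a)
  rw [hEq]; linarith

lemma cd_le_right {B : Finset U} (hB : B.Nonempty) (τ : U → U) (r : U → ℝ) (c b b' : U) :
    cd B hB τ r c b' ≤ cd B hB τ r c b + dist b b' := by
  obtain ⟨a, ha, hEq⟩ := cd_exists hB τ r c b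
  have h1 := cd_le hB τ r c b' ha
  have h2 := dist_triangle a b b'
  rw [hEq]; linarith

lemma dist_le_cd_cd {B : Finset U} (hB : B.Nonempty) (τ : U → U) (r : U → ℝ)
    (hl : ∀ a ∈ B, ∀ a' ∈ B, dist a a' ≤ dist (τ a) (τ a') + r a + r a') (c b b' : U) :
    dist b b' ≤ cd B hB τ r c b + cd B hB τ r c b' := by
  obtain ⟨a, ha, hEq⟩ := cd_exists hB τ r c b
  obtain ⟨a', ha', hEq'⟩ := cd_exists hB τ r c b'
  have h1 := dist_triangle b a b'
  have h2 := dist_triangle a a' b'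
  have h3 := hl a ha a' ha'
  have h4 := dist_triangle (τ a) c (τ a')
  have h5 : dist b a = dist a b := dist_comm _ _
  have h6 : dist (τ a) c = dist c (τ a) := dist_comm _ _
  have h7 : dist a' b' ≥ 0 := dist_nonneg
  rw [hEq, hEq']; linarith

lemma dist_le_cd_cd' {B : Finset U} (hB : B.Nonempty) (τ : U → U) (r : U → ℝ)
    (hu : ∀ a ∈ B, ∀ a' ∈ B, dist (τ a) (τ a') ≤ dist a a' + r a + r a') (c c' b : U) :
    dist c c' ≤ cd B hB τ r c b + cd B hB τ r c' b := by
  obtain ⟨a, ha, hEq⟩ := cd_exists hB τ r c b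
  obtain ⟨a', ha', hEq'⟩ := cd_exists hB τ r c' b
  have h1 := dist_triangle c (τ a) c'
  have h2 := dist_triangle (τ a) (τ a') c'
  have h3 := hu a ha a' ha'
  have h4 := dist_triangle a b a'
  have h5 : dist (τ a') c' = dist c' (τ a') := dist_comm _ _
  have h6 : dist b a' = dist a' b := dist_comm _ _
  rw [hEq, hEq']; linarith

/-- The glued space: a copy of `C` (old points) plus an abstract copy of `B` (new points). -/
structure Pt (C B : Finset U) : Type where
  t : {x // x ∈ C} ⊕ {x // x ∈ B}

instance (C B : Finset U) : Finite (Pt C B) :=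
  Finite.of_injective Pt.t (fun a b h => by cases a; cases b; simpa using h)

noncomputable def pdist (C B : Finset U) (hB : B.Nonempty) (τ : U → U) (r : U → ℝ) :
    Pt C B → Pt C B → ℝ
  | ⟨Sum.inl c⟩, ⟨Sum.inl c'⟩ => dist c.1 c'.1
  | ⟨Sum.inl c⟩, ⟨Sum.inr b⟩ => cd B hB τ r c.1 b.1
  | ⟨Sum.inr b⟩, ⟨Sum.inl c⟩ => cd B hB τ r c.1 b.1
  | ⟨Sum.inr b⟩, ⟨Sum.inr b'⟩ => dist b.1 b'.1

noncomputable def pmet (C B : Finset U) (hB : B.Nonempty) (τ : U → U) (r : U → ℝ)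
    (hr : ∀ a ∈ B, 0 < r a)
    (hl : ∀ a ∈ B, ∀ a' ∈ B, dist a a' ≤ dist (τ a) (τ a') + r a + r a')
    (hu : ∀ a ∈ B, ∀ a' ∈ B, dist (τ a) (τ a') ≤ dist a a' + r a + r a') :
    MetricSpace (Pt C B) where
  dist := pdist C B hB τ r
  dist_self := by rintro ⟨c | b⟩ <;> simp [pdist]
  dist_comm := by rintro ⟨x | x⟩ ⟨y | y⟩ <;> simp [pdist, dist_comm]
  dist_triangle := by
    rintro ⟨x | x⟩ ⟨y | y⟩ ⟨z | z⟩ <;> simp only [pdist]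
    · exact dist_triangle _ _ _
    · exact cd_le_left hB τ r _ _ _
    · exact dist_le_cd_cd' hB τ r hu _ _ _
    · exact cd_le_right hB τ r _ _ _
    · have := cd_le_left hB τ r z.1 y.1 x.1
      have h2 : dist z.1 y.1 = dist y.1 z.1 := dist_comm _ _
      linarith
    · exact dist_le_cd_cd hB τ r hl _ _ _
    · have := cd_le_right hB τ r z.1 y.1 x.1
      have h2 : dist y.1 x.1 = dist x.1 y.1 := dist_comm _ _
      linarith
    · exact dist_triangle _ _ _
  eq_of_dist_eq_zero := by
    rintro ⟨x | x⟩ ⟨y | y⟩ h <;> simp only [pdist] at h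
    · congr; exact Subtype.ext (dist_eq_zero.1 h)
    · exact absurd h (cd_pos hB τ r hr _ _).ne'
    · exact absurd h (cd_pos hB τ r hr _ _).ne'
    · congr; exact Subtype.ext (dist_eq_zero.1 h)


lemma exists_iso_close
    (hhom : ∀ s : Set U, s.Finite → ∀ f : s → U, Isometry f →
      ∃ g : U ≃ᵢ U, ∀ x : s, g x = f x)
    (huniv : ∀ (X : Type) [MetricSpace X] [Finite X], ∃ ι : X → U, Isometry ι)
    (B : Finset U) (hB : B.Nonempty) (τ : U → U) (r : U → ℝ)
    (hr : ∀ a ∈ B, 0 < r a)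
    (hl : ∀ a ∈ B, ∀ a' ∈ B, dist a a' ≤ dist (τ a) (τ a') + r a + r a')
    (hu : ∀ a ∈ B, ∀ a' ∈ B, dist (τ a) (τ a') ≤ dist a a' + r a + r a') :
    ∃ h : U ≃ᵢ U, ∀ b ∈ B, dist (h b) (τ b) ≤ r b := by
  classical
  set C : Finset U := B ∪ B.image τ with hC
  letI : MetricSpace (Pt C B) := pmet C B hB τ r hr hl hu
  obtain ⟨ι, hι⟩ := huniv (Pt C B)
  set j : (↑(C : Set U) : Type) → U := fun c => ι ⟨Sum.inl ⟨c.1, c.2⟩⟩ with hj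
  have hjiso : Isometry j := by
    apply Isometry.of_dist_eq
    intro x y
    have h1 := hι.dist_eq ⟨Sum.inl ⟨x.1, x.2⟩⟩ ⟨Sum.inl ⟨y.1, y.2⟩⟩
    have h2 : dist (⟨Sum.inl ⟨x.1, x.2⟩⟩ : Pt C B) ⟨Sum.inl ⟨y.1, y.2⟩⟩ = dist x.1 y.1 := rfl
    rw [Subtype.dist_eq]
    exact h1.trans h2
  obtain ⟨g, hg⟩ := hhom (↑C) C.finite_toSet j hjiso
  set ψ : (↑(B : Set U) : Type) → U := fun b => g.symm (ι ⟨Sum.inr ⟨b.1, b.2⟩⟩) with hψ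
  have hψiso : Isometry ψ := by
    apply Isometry.of_dist_eq
    intro x y
    have h0 := g.symm.isometry.dist_eq (ι ⟨Sum.inr ⟨x.1, x.2⟩⟩) (ι ⟨Sum.inr ⟨y.1, y.2⟩⟩)
    have h1 := hι.dist_eq ⟨Sum.inr ⟨x.1, x.2⟩⟩ ⟨Sum.inr ⟨y.1, y.2⟩⟩
    have h2 : dist (⟨Sum.inr ⟨x.1, x.2⟩⟩ : Pt C B) ⟨Sum.inr ⟨y.1, y.2⟩⟩ = dist x.1 y.1 := rfl
    rw [Subtype.dist_eq]
    exact (h0.trans h1).trans h2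
  obtain ⟨h, hh⟩ := hhom (↑B) B.finite_toSet ψ hψiso
  refine ⟨h, fun b hbB => ?_⟩
  have hτb : τ b ∈ C := Finset.mem_union_right _ (Finset.mem_image_of_mem τ hbB)
  have h1 : h b = ψ ⟨b, hbB⟩ := hh ⟨b, hbB⟩
  have h2 : g (τ b) = ι ⟨Sum.inl ⟨τ b, hτb⟩⟩ := hg ⟨τ b, hτb⟩
  rw [h1, hψ]
  rw [← g.isometry.dist_eq, g.apply_symm_apply, h2]
  have h3 : dist (ι ⟨Sum.inr ⟨b, hbB⟩⟩) (ι ⟨Sum.inl ⟨τ b, hτb⟩⟩)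
      = cd B hB τ r (τ b) b := by
    rw [hι.dist_eq]; rfl
  rw [h3]
  have h4 := cd_le hB τ r (τ b) b hbB
  simp only [dist_self] at h4
  linarith

lemma exists_net {K : Set U} (hK : IsCompact K) {ε : ℝ} (hε : 0 < ε) :
    ∃ S : Finset U, ↑S ⊆ K ∧ ∀ x ∈ K, ∃ s ∈ S, dist x s ≤ ε := by
  classical
  obtain ⟨t, htK, htfin, hcov⟩ := hK.finite_cover_balls hε
  refine ⟨htfin.toFinset, by simpa using htK, fun x hx => ?_⟩
  obtain ⟨s, hs, hxs⟩ := Set.mem_iUnion₂.mp (hcov hx)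
  exact ⟨s, htfin.mem_toFinset.mpr hs, (Metric.mem_ball.mp hxs).le⟩

lemma exists_bound
    (hhom : ∀ s : Set U, s.Finite → ∀ f : s → U, Isometry f →
      ∃ g : U ≃ᵢ U, ∀ x : s, g x = f x)
    {K : Set U} (hK : IsCompact K) (f : K → U) (hf : Isometry f)
    {ε : ℝ} (hε : 0 < ε) : ∃ g : U ≃ᵢ U, ∀ x : K, dist (g x) (f x) ≤ ε := by
  obtain ⟨S, hSK, hnet⟩ := exists_net hK (half_pos hε)
  set fS : (↑(S : Set U) : Type) → U := fun a => f ⟨a.1, hSK a.2⟩ with hfSdef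
  have hfS : Isometry fS := by
    apply Isometry.of_dist_eq
    intro a b
    calc dist (fS a) (fS b) = dist (⟨a.1, hSK a.2⟩ : K) ⟨b.1, hSK b.2⟩ := hf.dist_eq _ _
      _ = dist a.1 b.1 := Subtype.dist_eq _ _
      _ = dist a b := (Subtype.dist_eq a b).symm
  obtain ⟨g, hg⟩ := hhom ↑S S.finite_toSet fS hfS
  refine ⟨g, fun x => ?_⟩
  obtain ⟨s, hsS, hxs⟩ := hnet x.1 x.2
  have hgs : g s = f ⟨s, hSK hsS⟩ := hg ⟨s, hsS⟩
  have h1 : dist (g x.1) (g s) = dist x.1 s := g.isometry.dist_eq _ _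
  have h2 : dist (f ⟨s, hSK hsS⟩) (f x) = dist s x.1 := by
    rw [hf.dist_eq, Subtype.dist_eq]
  have h3 := dist_triangle (g x.1) (g s) (f x)
  rw [hgs] at h3 h1
  have h4 : dist s x.1 = dist x.1 s := dist_comm _ _
  linarith


lemma exists_step
    (hhom : ∀ s : Set U, s.Finite → ∀ f : s → U, Isometry f →
      ∃ g : U ≃ᵢ U, ∀ x : s, g x = f x)
    (huniv : ∀ (X : Type) [MetricSpace X] [Finite X], ∃ ι : X → U, Isometry ι)
    {K : Set U} (hK : IsCompact K) (f : K → U) (hf : Isometry f)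
    (u : ℕ → U) (n : ℕ) (g : U ≃ᵢ U)
    (hg : ∀ x : K, dist (g x) (f x) ≤ (1/2 : ℝ)^n) :
    ∃ g' : U ≃ᵢ U, (∀ x : K, dist (g' x) (f x) ≤ (1/2 : ℝ)^(n+1)) ∧
      ∀ k ≤ n, dist (g' (u k)) (g (u k)) ≤ 2*(1/2 : ℝ)^n ∧
        dist (g'.symm (u k)) (g.symm (u k)) ≤ 2*(1/2 : ℝ)^n := by
  classical
  set δ : ℝ := (1/2)^n with hδdef
  have hδ : 0 < δ := by positivity
  obtain ⟨S, hSK, hnet⟩ := exists_net hK (show (0:ℝ) < δ/8 by linarith)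
  set E : Finset U :=
    (Finset.range (n+1)).image u ∪ (Finset.range (n+1)).image (fun k => g.symm (u k)) with hE
  set B : Finset U := S ∪ E with hBdef
  have huE : ∀ k ≤ n, u k ∈ B :=
    fun k hk => Finset.mem_union_right _ (Finset.mem_union_left _
      (Finset.mem_image_of_mem u (Finset.mem_range.mpr (by omega))))
  have hzE : ∀ k ≤ n, g.symm (u k) ∈ B :=
    fun k hk => Finset.mem_union_right _ (Finset.mem_union_right _
      (Finset.mem_image_of_mem _ (Finset.mem_range.mpr (by omega))))
  have hB : B.Nonempty := ⟨u 0, huE 0 (Nat.zero_le n)⟩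
  set τ : U → U := fun a => if ha : a ∈ S then g.symm (f ⟨a, hSK ha⟩) else a with hτ
  set r : U → ℝ := fun a => if a ∈ S then δ/4 else δ with hrdef
  have hrS : ∀ a ∈ S, r a = δ/4 := fun a ha => by simp [hrdef, ha]
  have hrN : ∀ a, a ∉ S → r a = δ := fun a ha => by simp [hrdef, ha]
  have hrpos : ∀ a ∈ B, 0 < r a := by
    intro a _
    by_cases h : a ∈ S
    · rw [hrS a h]; linarith
    · rw [hrN a h]; exact hδ
  have hrle : ∀ a, r a ≤ δ := by
    intro a
    by_cases h : a ∈ S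
    · rw [hrS a h]; linarith
    · rw [hrN a h]
  have hτS : ∀ a, (ha : a ∈ S) → τ a = g.symm (f ⟨a, hSK ha⟩) := by
    intro a ha; simp [hτ, ha]
  have hτN : ∀ a, a ∉ S → τ a = a := by
    intro a ha; simp [hτ, ha]
  have hmove : ∀ a, dist (τ a) a ≤ δ := by
    intro a
    by_cases ha : a ∈ S
    · rw [hτS a ha, ← g.isometry.dist_eq, g.apply_symm_apply, dist_comm]
      exact hg ⟨a, hSK ha⟩
    · rw [hτN a ha, dist_self]; linarith
  -- exact isometry on S-pairs
  have hSS : ∀ a, (ha : a ∈ S) → ∀ b, (hb : b ∈ S) → dist (τ a) (τ b) = dist a b := by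
    intro a ha b hb
    rw [hτS a ha, hτS b hb, g.symm.isometry.dist_eq, hf.dist_eq, Subtype.dist_eq]
  have hpair : ∀ a ∈ B, ∀ b ∈ B, |dist (τ a) (τ b) - dist a b| ≤ r a + r b := by
    intro a haB b hbB
    have h0a := (hrpos a haB).le
    have h0b := (hrpos b hbB).le
    by_cases ha : a ∈ S <;> by_cases hb : b ∈ S
    · rw [hSS a ha b hb]; simpa using by linarith
    · rw [hτN b hb]
      have := abs_dist_sub_le (τ a) a b
      have h2 := hmove a
      have h3 : r b = δ := hrN b hb
      calc |dist (τ a) b - dist a b| ≤ dist (τ a) a := abs_dist_sub_le _ _ _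
        _ ≤ δ := hmove a
        _ ≤ r a + r b := by rw [h3]; linarith
    · rw [hτN a ha]
      have h3 : r a = δ := hrN a ha
      calc |dist a (τ b) - dist a b| = |dist (τ b) a - dist b a| := by
            rw [dist_comm a (τ b), dist_comm a b]
        _ ≤ dist (τ b) b := abs_dist_sub_le _ _ _
        _ ≤ δ := hmove b
        _ ≤ r a + r b := by rw [h3]; linarith
    · rw [hτN a ha, hτN b hb]; simpa using by linarith
  have hl : ∀ a ∈ B, ∀ b ∈ B, dist a b ≤ dist (τ a) (τ b) + r a + r b := by
    intro a ha b hb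
    have := abs_le.mp (hpair a ha b hb)
    linarith [this.1]
  have hu' : ∀ a ∈ B, ∀ b ∈ B, dist (τ a) (τ b) ≤ dist a b + r a + r b := by
    intro a ha b hb
    have := abs_le.mp (hpair a ha b hb)
    linarith [this.2]
  obtain ⟨h, hclose⟩ := exists_iso_close hhom huniv B hB τ r hrpos hl hu'
  have hhb : ∀ b ∈ B, dist (h b) b ≤ 2*δ := by
    intro b hb
    have h1 := hclose b hb
    have h2 := hmove b
    have h3 := hrle b
    have h4 := dist_triangle (h b) (τ b) b
    linarith
  refine ⟨h.trans g, ?_, ?_⟩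
  · intro x
    obtain ⟨s, hsS, hxs⟩ := hnet x.1 x.2
    have hsB : s ∈ B := Finset.mem_union_left _ hsS
    have e1 : dist ((h.trans g) x.1) ((h.trans g) s) = dist x.1 s :=
      (h.trans g).isometry.dist_eq _ _
    have e2 : dist ((h.trans g) s) (f ⟨s, hSK hsS⟩) = dist (h s) (τ s) := by
      rw [hτS s hsS]
      calc dist ((h.trans g) s) (f ⟨s, hSK hsS⟩)
          = dist (g.symm ((h.trans g) s)) (g.symm (f ⟨s, hSK hsS⟩)) :=
            (g.symm.isometry.dist_eq _ _).symm
        _ = dist (h s) (g.symm (f ⟨s, hSK hsS⟩)) := by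
            rw [show g.symm ((h.trans g) s) = h s from g.symm_apply_apply (h s)]
    have e3 : dist (f ⟨s, hSK hsS⟩) (f x) = dist s x.1 := by
      rw [hf.dist_eq, Subtype.dist_eq]
    have e4 := hclose s hsB
    have e5 : r s = δ/4 := hrS s hsS
    have t1 := dist_triangle ((h.trans g) x.1) ((h.trans g) s) (f x)
    have t2 := dist_triangle ((h.trans g) s) (f ⟨s, hSK hsS⟩) (f x)
    have hpow : (1/2 : ℝ)^(n+1) = δ/2 := by rw [hδdef, pow_succ]; ring
    rw [hpow]
    have h4 : dist s x.1 = dist x.1 s := dist_comm _ _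
    rw [e2] at t2
    linarith
  · intro k hk
    constructor
    · have : (h.trans g) (u k) = g (h (u k)) := rfl
      rw [this, g.isometry.dist_eq]
      exact hhb (u k) (huE k hk)
    · have e1 : (h.trans g).symm (u k) = h.symm (g.symm (u k)) := rfl
      rw [e1]
      have e2 : dist (h.symm (g.symm (u k))) (g.symm (u k))
          = dist (g.symm (u k)) (h (g.symm (u k))) := by
        rw [← h.isometry.dist_eq (h.symm (g.symm (u k))) (g.symm (u k)), h.apply_symm_apply]
      rw [e2, dist_comm]
      exact hhb _ (hzE k hk)

end HuhAux

open HuhAux Filter Topology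

/-- Huhunaišvili's theorem: in the Urysohn space (a separable complete ultrahomogeneous
metric space universal for finite metric spaces), any isometry defined on a compact
subset extends to a surjective isometry of the whole space. -/
theorem huhunaisvili {U : Type} [MetricSpace U] [CompleteSpace U]
    [TopologicalSpace.SeparableSpace U]
    (hhom : ∀ s : Set U, s.Finite → ∀ f : s → U, Isometry f →
      ∃ g : U ≃ᵢ U, ∀ x : s, g x = f x)
    (huniv : ∀ (X : Type) [MetricSpace X] [Finite X], ∃ ι : X → U, Isometry ι)
    (K : Set U) (hK : IsCompact K) (f : K → U) (hf : Isometry f) :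
    ∃ g : U ≃ᵢ U, ∀ x : K, g x = f x := by
  classical
  rcases isEmpty_or_nonempty U with hemp | hne
  · exact ⟨IsometryEquiv.refl U, fun x => (hemp.false x.1).elim⟩
  obtain ⟨u, hu⟩ := TopologicalSpace.exists_dense_seq U
  set P : ℕ → (U ≃ᵢ U) → Prop := fun n g => ∀ x : K, dist (g x) (f x) ≤ (1/2 : ℝ)^n with hP
  have hstep : ∀ (n : ℕ) (g : U ≃ᵢ U), ∃ g' : U ≃ᵢ U, P (n+1) g' ∧
      (P n g → ∀ k ≤ n, dist (g' (u k)) (g (u k)) ≤ 2*(1/2 : ℝ)^n ∧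
        dist (g'.symm (u k)) (g.symm (u k)) ≤ 2*(1/2 : ℝ)^n) := by
    intro n g
    by_cases hp : P n g
    · obtain ⟨g', h1, h2⟩ := exists_step hhom huniv hK f hf u n g hp
      exact ⟨g', h1, fun _ => h2⟩
    · obtain ⟨g', h1⟩ := exists_bound hhom hK f hf
        (show (0:ℝ) < (1/2)^(n+1) by positivity)
      exact ⟨g', h1, fun hcontra => absurd hcontra hp⟩
  choose F hF1 hF2 using hstep
  obtain ⟨g0, hg0⟩ := exists_bound hhom hK f hf (show (0:ℝ) < (1/2)^0 by norm_num)
  set G : ℕ → U ≃ᵢ U := fun n => Nat.rec g0 (fun n g => F n g) n with hG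
  have hGs : ∀ n, G (n+1) = F n (G n) := fun n => rfl
  have hPG : ∀ n, P n (G n) := by
    intro n
    induction n with
    | zero => exact hg0
    | succ m _ => rw [hGs]; exact hF1 m (G m)
  have hC : ∀ n, ∀ k ≤ n, dist (G (n+1) (u k)) (G n (u k)) ≤ 2*(1/2 : ℝ)^n ∧
      dist ((G (n+1)).symm (u k)) ((G n).symm (u k)) ≤ 2*(1/2 : ℝ)^n := by
    intro n
    rw [hGs]
    exact hF2 n (G n) (hPG n)
  have tele : ∀ (N m : ℕ), N ≤ m → ∀ k ≤ N,
      dist (G m (u k)) (G N (u k)) ≤ 4*(1/2 : ℝ)^N - 4*(1/2)^m ∧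
      dist ((G m).symm (u k)) ((G N).symm (u k)) ≤ 4*(1/2 : ℝ)^N - 4*(1/2)^m := by
    intro N m hNm
    induction m, hNm using Nat.le_induction with
    | base => intro k _; simp
    | succ m hm ih =>
      intro k hk
      obtain ⟨h1, h1'⟩ := hC m k (le_trans hk hm)
      obtain ⟨h2, h2'⟩ := ih k hk
      have hpow : (4 : ℝ)*(1/2)^(m+1) = 2*(1/2)^m := by rw [pow_succ]; ring
      constructor
      · have t := dist_triangle (G (m+1) (u k)) (G m (u k)) (G N (u k))
        linarith
      · have t := dist_triangle ((G (m+1)).symm (u k)) ((G m).symm (u k)) ((G N).symm (u k))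
        linarith
  have tele' : ∀ (N m : ℕ), N ≤ m → ∀ k ≤ N,
      dist (G m (u k)) (G N (u k)) ≤ 4*(1/2 : ℝ)^N ∧
      dist ((G m).symm (u k)) ((G N).symm (u k)) ≤ 4*(1/2 : ℝ)^N := by
    intro N m hNm k hk
    obtain ⟨h1, h2⟩ := tele N m hNm k hk
    have : (0:ℝ) ≤ 4*(1/2)^m := by positivity
    exact ⟨by linarith, by linarith⟩
  -- Cauchy sequences
  have hsmall : ∀ ε : ℝ, 0 < ε → ∃ M : ℕ, 4*(1/2 : ℝ)^M ≤ ε/2 := by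
    intro ε hε
    obtain ⟨M, hM⟩ := exists_pow_lt_of_lt_one (show (0:ℝ) < ε/8 by linarith)
      (by norm_num : (1/2 : ℝ) < 1)
    exact ⟨M, by linarith⟩
  have hcau : ∀ x : U, CauchySeq (fun n => G n x) := by
    intro x
    rw [Metric.cauchySeq_iff']
    intro ε hε
    obtain ⟨k, hk⟩ := Metric.denseRange_iff.mp hu x (ε/8) (by linarith)
    obtain ⟨M, hM⟩ := hsmall ε hε
    refine ⟨max k M, fun n hn => ?_⟩
    set N := max k M with hN
    have hNn : N ≤ n := hn
    have hkN : k ≤ N := le_max_left _ _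
    have hMN : M ≤ N := le_max_right _ _
    have hmono : (1/2 : ℝ)^N ≤ (1/2)^M :=
      pow_le_pow_of_le_one (by norm_num) (by norm_num) hMN
    have h1 : dist (G n x) (G n (u k)) = dist x (u k) := (G n).isometry.dist_eq _ _
    have h2 := (tele' N n hNn k hkN).1
    have h3 : dist (G N (u k)) (G N x) = dist (u k) x := (G N).isometry.dist_eq _ _
    have t := dist_triangle4 (G n x) (G n (u k)) (G N (u k)) (G N x)
    have h4 : dist (u k) x = dist x (u k) := dist_comm _ _
    have hlt : dist x (u k) < ε/8 := hk
    linarith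
  have hcau' : ∀ x : U, CauchySeq (fun n => (G n).symm x) := by
    intro x
    rw [Metric.cauchySeq_iff']
    intro ε hε
    obtain ⟨k, hk⟩ := Metric.denseRange_iff.mp hu x (ε/8) (by linarith)
    obtain ⟨M, hM⟩ := hsmall ε hε
    refine ⟨max k M, fun n hn => ?_⟩
    set N := max k M with hN
    have hNn : N ≤ n := hn
    have hkN : k ≤ N := le_max_left _ _
    have hMN : M ≤ N := le_max_right _ _
    have hmono : (1/2 : ℝ)^N ≤ (1/2)^M :=
      pow_le_pow_of_le_one (by norm_num) (by norm_num) hMN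
    have h1 : dist ((G n).symm x) ((G n).symm (u k)) = dist x (u k) :=
      (G n).symm.isometry.dist_eq _ _
    have h2 := (tele' N n hNn k hkN).2
    have h3 : dist ((G N).symm (u k)) ((G N).symm x) = dist (u k) x :=
      (G N).symm.isometry.dist_eq _ _
    have t := dist_triangle4 ((G n).symm x) ((G n).symm (u k)) ((G N).symm (u k)) ((G N).symm x)
    have h4 : dist (u k) x = dist x (u k) := dist_comm _ _
    have hlt : dist x (u k) < ε/8 := hk
    linarith
  choose T hT using fun x => cauchySeq_tendsto_of_complete (hcau x)
  choose T' hT' using fun x => cauchySeq_tendsto_of_complete (hcau' x)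
  have hTd : ∀ x y : U, dist (T x) (T y) = dist x y := by
    intro x y
    have h1 : Tendsto (fun n => dist (G n x) (G n y)) atTop (𝓝 (dist (T x) (T y))) :=
      (hT x).dist (hT y)
    have h2 : (fun n : ℕ => dist (G n x) (G n y)) = fun _ => dist x y :=
      funext fun n => (G n).isometry.dist_eq x y
    rw [h2] at h1
    exact tendsto_nhds_unique h1 tendsto_const_nhds
  have hdzero : ∀ x : U, Tendsto (fun n => dist (T x) (G n x)) atTop (𝓝 0) := by
    intro x
    have := tendsto_iff_dist_tendsto_zero.mp (hT x)
    simpa [dist_comm] using this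
  have hdzero' : ∀ x : U, Tendsto (fun n => dist (T' x) ((G n).symm x)) atTop (𝓝 0) := by
    intro x
    have := tendsto_iff_dist_tendsto_zero.mp (hT' x)
    simpa [dist_comm] using this
  have hleft : ∀ x, T' (T x) = x := by
    intro x
    have h3 : ∀ n, dist (T' (T x)) x ≤
        dist (T' (T x)) ((G n).symm (T x)) + dist (T x) (G n x) := by
      intro n
      have e : dist ((G n).symm (T x)) x = dist (T x) (G n x) := by
        rw [← (G n).isometry.dist_eq ((G n).symm (T x)) x, (G n).apply_symm_apply]
      have t := dist_triangle (T' (T x)) ((G n).symm (T x)) x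
      linarith [t, e.le, e.ge]
    have h4 : Tendsto (fun n => dist (T' (T x)) ((G n).symm (T x)) + dist (T x) (G n x))
        atTop (𝓝 0) := by
      simpa using (hdzero' (T x)).add (hdzero x)
    have := ge_of_tendsto h4 (Eventually.of_forall h3)
    exact dist_le_zero.mp this
  have hright : ∀ x, T (T' x) = x := by
    intro x
    have h3 : ∀ n, dist (T (T' x)) x ≤
        dist (T (T' x)) (G n (T' x)) + dist (T' x) ((G n).symm x) := by
      intro n
      have e : dist (G n (T' x)) x = dist (T' x) ((G n).symm x) := by
        have e1 := (G n).isometry.dist_eq (T' x) ((G n).symm x)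
        rw [(G n).apply_symm_apply] at e1
        exact e1
      have t := dist_triangle (T (T' x)) (G n (T' x)) x
      linarith [t, e.le, e.ge]
    have h4 : Tendsto (fun n => dist (T (T' x)) (G n (T' x)) + dist (T' x) ((G n).symm x))
        atTop (𝓝 0) := by
      simpa using (hdzero (T' x)).add (hdzero' x)
    have := ge_of_tendsto h4 (Eventually.of_forall h3)
    exact dist_le_zero.mp this
  have heq : ∀ x : K, T x = f x := by
    intro x
    have h3 : ∀ n, dist (T x.1) (f x) ≤ dist (T x.1) (G n x.1) + (1/2 : ℝ)^n := by
      intro n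
      have t := dist_triangle (T x.1) (G n x.1) (f x)
      have := hPG n x
      linarith
    have h4 : Tendsto (fun n => dist (T x.1) (G n x.1) + (1/2 : ℝ)^n) atTop (𝓝 0) := by
      have hp : Tendsto (fun n : ℕ => (1/2 : ℝ)^n) atTop (𝓝 0) :=
        tendsto_pow_atTop_nhds_zero_of_lt_one (by norm_num) (by norm_num)
      simpa using (hdzero x.1).add hp
    have := ge_of_tendsto h4 (Eventually.of_forall h3)
    exact dist_le_zero.mp this
  exact ⟨IsometryEquiv.mk ⟨T, T', hleft, hright⟩ (Isometry.of_dist_eq hTd), heq⟩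
end

section
/- Let (A₁,…,A_k) be a partition of a probability space X into positive measure sets, and let (e_{ij}) be a P-additive matrix with e_{ii} < 2μ(C₁) where C₁,…,C_k satisfy Cᵢ ⊆ Aᵢ and μ(C₁) = … = μ(C_k) > 0. Then there exists a partition (B₁,…,B_k) of X with μ(Bᵢ) = μ(Aᵢ), μ(Bᵢ Δ A_j) = e_{ij} for all i, j, and moreover Bᵢ ∩ A_j ⊆ C_j for i ≠ j, and Aᵢ \ Bᵢ ⊆ Cᵢ for each i. -/
/-!
For `j ≠ i`, the set `Bⱼ` takes from `Aᵢ` a piece `Pᵢⱼ ⊆ Cᵢ` of measure `(μ Aᵢ + μ Aⱼ - eⱼᵢ) / 2`,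
and `Aᵢ` keeps the rest `Pᵢᵢ` for `Bᵢ`. By the second sum condition the pieces cut from `Aᵢ`
have total measure `eᵢᵢ / 2 < μ Cᵢ`, so divisibility of `μ` lets us carve them disjointly out
of `Cᵢ`. By the first one the pieces arriving in `Bⱼ` have the same total measure `eⱼⱼ / 2`,
so `μ Bⱼ = μ Aⱼ`, and then `μ (Bⱼ ∆ Aᵢ) = μ Bⱼ + μ Aᵢ - 2 μ Pᵢⱼ = eⱼᵢ`.
-/

open MeasureTheory Set Function
open scoped ENNReal symmDiff

section Partition

variable {α ι κ : Type*}

lemma pairwise_disjoint_update_sdiff_iUnion {Q : ι → Set α} {i₀ : ι} [DecidableEq ι]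
    (hQ : ({i₀}ᶜ : Set ι).PairwiseDisjoint Q) (s : Set α) :
    Pairwise (Disjoint on update Q i₀ (s \ ⋃ i ≠ i₀, Q i)) := by
  have hrest : ∀ j ≠ i₀, Disjoint (s \ ⋃ i ≠ i₀, Q i) (Q j) := fun j hj =>
    disjoint_sdiff_left.mono_right (subset_iUnion₂ (s := fun i (_ : i ≠ i₀) => Q i) j hj)
  intro i j hij
  rcases eq_or_ne i i₀ with rfl | hi
  · simpa [onFun, update_of_ne hij.symm] using hrest j hij.symm
  rcases eq_or_ne j i₀ with rfl | hj
  · simpa [onFun, update_of_ne hi] using (hrest i hi).symm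
  simpa [onFun, update_of_ne hi, update_of_ne hj] using hQ hi hj hij

lemma iUnion_update_sdiff_iUnion {Q : ι → Set α} {i₀ : ι} [DecidableEq ι] {s : Set α}
    (hQs : ∀ i ≠ i₀, Q i ⊆ s) :
    ⋃ i, update Q i₀ (s \ ⋃ i ≠ i₀, Q i) i = s := by
  apply Subset.antisymm
  · refine iUnion_subset fun i => ?_
    rcases eq_or_ne i i₀ with rfl | hi
    · simp
    · simpa [update_of_ne hi] using hQs i hi
  · intro x hx
    by_cases hxU : x ∈ ⋃ i ≠ i₀, Q i
    · obtain ⟨i, hi, hxi⟩ := mem_iUnion₂.1 hxU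
      exact mem_iUnion.2 ⟨i, by rwa [update_of_ne hi]⟩
    · exact mem_iUnion.2 ⟨i₀, by rw [update_self]; exact ⟨hx, hxU⟩⟩

lemma iUnion_inter_eq_of_pairwise_disjoint {A : ι → Set α} {P : ι → κ → Set α}
    (hA : Pairwise (Disjoint on A)) (hPA : ∀ i j, P i j ⊆ A i) (i : ι) (j : κ) :
    (⋃ l, P l j) ∩ A i = P i j := by
  refine Subset.antisymm (fun x ⟨hxP, hxA⟩ => ?_) fun x hx => ⟨mem_iUnion.2 ⟨i, hx⟩, hPA i j hx⟩
  obtain ⟨l, hl⟩ := mem_iUnion.1 hxP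
  obtain rfl : l = i := by
    by_contra hli
    exact disjoint_left.1 (hA hli) (hPA l j hl) hxA
  exact hl

lemma pairwise_disjoint_iUnion_swap {A : ι → Set α} {P : ι → κ → Set α}
    (hA : Pairwise (Disjoint on A)) (hPA : ∀ i j, P i j ⊆ A i)
    (hP : ∀ i, Pairwise (Disjoint on P i)) :
    Pairwise (Disjoint on fun j => ⋃ i, P i j) := by
  intro j j' hjj'
  refine disjoint_iUnion_left.2 fun i => disjoint_iUnion_right.2 fun i' => ?_
  rcases eq_or_ne i i' with rfl | hii'
  · exact hP i hjj'
  · exact (hA hii').mono (hPA i j) (hPA i' j')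

lemma sdiff_iUnion_subset_iUnion_ne {A : ι → Set α} {P : ι → ι → Set α}
    (hPA : ∀ i, ⋃ j, P i j = A i) (i : ι) :
    A i \ ⋃ l, P l i ⊆ ⋃ j ≠ i, P i j := by
  rintro x ⟨hxA, hxB⟩
  obtain ⟨j, hj⟩ := mem_iUnion.1 (hPA i ▸ hxA)
  have hji : j ≠ i := by
    rintro rfl
    exact hxB (mem_iUnion.2 ⟨j, hj⟩)
  exact mem_iUnion₂.2 ⟨j, hji, hj⟩

end Partition

section Carving

variable {X ι : Type*} [MeasurableSpace X] {μ : Measure X}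

lemma exists_pairwiseDisjoint_subsets_measure_eq
    (hdiv : ∀ (s : Set X) (r : ENNReal), MeasurableSet s → r ≤ μ s →
      ∃ t ⊆ s, MeasurableSet t ∧ μ t = r)
    {s : Set X} (hs : MeasurableSet s) (hsfin : μ s ≠ ∞) (r : ι → ℝ≥0∞) (I : Finset ι)
    (hr : ∑ i ∈ I, r i ≤ μ s) :
    ∃ T : ι → Set X, (∀ i, MeasurableSet (T i)) ∧ (∀ i, T i ⊆ s) ∧
      (I : Set ι).PairwiseDisjoint T ∧ ∀ i ∈ I, μ (T i) = r i := by
  classical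
  induction I using Finset.induction_on with
  | empty => exact ⟨fun _ => ∅, fun _ => .empty, fun _ => empty_subset s, by simp, by simp⟩
  | insert a I ha ih =>
    rw [Finset.sum_insert ha] at hr
    obtain ⟨T, hTm, hTs, hTd, hTμ⟩ := ih (le_add_self.trans hr)
    have hUm : MeasurableSet (⋃ i ∈ I, T i) := .biUnion I.countable_toSet fun i _ => hTm i
    have hUμ : μ (⋃ i ∈ I, T i) = ∑ i ∈ I, r i := by
      rw [measure_biUnion_finset hTd fun i _ => hTm i]
      exact Finset.sum_congr rfl hTμ
    have hfree : r a ≤ μ (s \ ⋃ i ∈ I, T i) := by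
      rw [measure_sdiff (iUnion₂_subset fun i _ => hTs i) hUm.nullMeasurableSet
        (ne_top_of_le_ne_top hsfin (measure_mono (iUnion₂_subset fun i _ => hTs i))), hUμ]
      exact ENNReal.le_sub_of_add_le_right (ne_top_of_le_ne_top hsfin (le_add_self.trans hr)) hr
    obtain ⟨t, hts, htm, htμ⟩ := hdiv _ _ (hs.diff hUm) hfree
    have hTa : ∀ i ∈ I, update T a t i = T i := fun i hi =>
      update_of_ne (ne_of_mem_of_not_mem hi ha) _ _
    refine ⟨update T a t, ?_, ?_, ?_, ?_⟩
    · intro i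
      rw [update_apply]
      split_ifs
      exacts [htm, hTm i]
    · intro i
      rw [update_apply]
      split_ifs
      exacts [hts.trans sdiff_subset, hTs i]
    · rw [Finset.coe_insert]
      refine PairwiseDisjoint.insert (fun i hi j hj hij => ?_) fun j hj _ => ?_
      · simpa only [onFun, hTa i hi, hTa j hj] using hTd hi hj hij
      · rw [update_self, hTa j hj]
        exact disjoint_sdiff_left.mono hts (subset_iUnion₂ (s := fun i (_ : i ∈ I) => T i) j hj)
    · intro i hi
      rcases Finset.mem_insert.1 hi with rfl | hi
      · rwa [update_self]
      · rw [hTa i hi, hTμ i hi]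

lemma exists_partition_measureReal_eq_of_ne [IsFiniteMeasure μ] [Fintype ι] [DecidableEq ι]
    (hdiv : ∀ (s : Set X) (r : ENNReal), MeasurableSet s → r ≤ μ s →
      ∃ t ⊆ s, MeasurableSet t ∧ μ t = r)
    {s c : Set X} (hs : MeasurableSet s) (hc : MeasurableSet c) (hcs : c ⊆ s)
    (i₀ : ι) (r : ι → ℝ) (hr0 : ∀ i, 0 ≤ r i) (hr : ∑ i ∈ Finset.univ.erase i₀, r i ≤ μ.real c) :
    ∃ T : ι → Set X, (∀ i, MeasurableSet (T i)) ∧ Pairwise (Disjoint on T) ∧ ⋃ i, T i = s ∧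
      ∀ i ≠ i₀, T i ⊆ c ∧ μ.real (T i) = r i := by
  have hr' : ∑ i ∈ Finset.univ.erase i₀, ENNReal.ofReal (r i) ≤ μ c := by
    rw [← ENNReal.ofReal_sum_of_nonneg fun i _ => hr0 i, ← ofReal_measureReal]
    exact ENNReal.ofReal_le_ofReal hr
  obtain ⟨Q, hQm, hQc, hQd, hQμ⟩ :=
    exists_pairwiseDisjoint_subsets_measure_eq hdiv hc (measure_ne_top μ c) _ _ hr'
  rw [Finset.coe_erase, Finset.coe_univ, ← compl_eq_univ_sdiff] at hQd
  refine ⟨update Q i₀ (s \ ⋃ i ≠ i₀, Q i), fun i => ?_, pairwise_disjoint_update_sdiff_iUnion hQd s,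
    iUnion_update_sdiff_iUnion fun i _ => (hQc i).trans hcs, fun i hi => ?_⟩
  · rw [update_apply]
    split_ifs
    exacts [hs.diff (.iUnion fun i => .iUnion fun _ => hQm i), hQm i]
  · rw [update_of_ne hi, measureReal_def, hQμ i (Finset.mem_erase.2 ⟨hi, Finset.mem_univ i⟩),
      ENNReal.toReal_ofReal (hr0 i)]
    exact ⟨hQc i, rfl⟩

end Carving

namespace PAdditive

variable {ι : Type*} [Fintype ι] [DecidableEq ι] {a : ι → ℝ} {e p : ι → ι → ℝ}

lemma diag_eq (he4 : ∀ i, e i i = ∑ j ∈ Finset.univ.erase i, (a i + a j - e j i))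
    (hrow : ∀ i, ∑ j, p i j = a i) (hp : ∀ i j, j ≠ i → p i j = (a i + a j - e j i) / 2)
    (i : ι) : p i i = a i - e i i / 2 := by
  have h := hrow i
  rw [← Finset.add_sum_erase _ _ (Finset.mem_univ i),
    Finset.sum_congr rfl fun j hj => hp i j (Finset.ne_of_mem_erase hj), ← Finset.sum_div,
    ← he4 i] at h
  linarith

lemma sum_col_eq (he3 : ∀ i, e i i = ∑ j ∈ Finset.univ.erase i, (a i + a j - e i j))
    (he4 : ∀ i, e i i = ∑ j ∈ Finset.univ.erase i, (a i + a j - e j i))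
    (hrow : ∀ i, ∑ j, p i j = a i) (hp : ∀ i j, j ≠ i → p i j = (a i + a j - e j i) / 2)
    (j : ι) : ∑ i, p i j = a j := by
  have hcol : ∑ i ∈ Finset.univ.erase j, (a i + a j - e j i) = e j j := by
    rw [he3 j]
    exact Finset.sum_congr rfl fun i _ => by ring
  rw [← Finset.add_sum_erase _ _ (Finset.mem_univ j), diag_eq he4 hrow hp j,
    Finset.sum_congr rfl fun i hi => hp i j (Finset.ne_of_mem_erase hi).symm, ← Finset.sum_div,
    hcol]
  ring

lemma add_sub_two_mul_eq (he4 : ∀ i, e i i = ∑ j ∈ Finset.univ.erase i, (a i + a j - e j i))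
    (hrow : ∀ i, ∑ j, p i j = a i) (hp : ∀ i j, j ≠ i → p i j = (a i + a j - e j i) / 2)
    (i j : ι) : a j + a i - 2 * p i j = e j i := by
  rcases eq_or_ne j i with rfl | hji
  · rw [diag_eq he4 hrow hp]
    ring
  · rw [hp i j hji]
    ring

end PAdditive

lemma measureReal_symmDiff_eq_add_sub_two_mul_inter {X : Type*} [MeasurableSpace X]
    {μ : Measure X} [IsFiniteMeasure μ] {s t : Set X} (hs : MeasurableSet s)
    (ht : MeasurableSet t) : μ.real (s ∆ t) = μ.real s + μ.real t - 2 * μ.real (s ∩ t) := by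
  have hs' := measureReal_inter_add_sdiff (μ := μ) (s := s) ht
  have ht' := measureReal_inter_add_sdiff (μ := μ) (s := t) hs
  rw [inter_comm] at ht'
  rw [measureReal_symmDiff_eq hs ht]
  linarith

theorem realize_additive_matrix_general {X : Type*} [MeasurableSpace X] (μ : Measure X)
    [IsProbabilityMeasure μ]
    (hdiv : ∀ (s : Set X) (r : ENNReal), MeasurableSet s → r ≤ μ s →
      ∃ t ⊆ s, MeasurableSet t ∧ μ t = r)
    (k : ℕ) [NeZero k] (A : Fin k → Set X) (hAmeas : ∀ i, MeasurableSet (A i))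
    (hAdisj : Pairwise (Function.onFun Disjoint A)) (hAcover : ⋃ i, A i = Set.univ)
    (e : Fin k → Fin k → ℝ)
    (he2 : ∀ i j, e i j ≤ (μ (A i)).toReal + (μ (A j)).toReal)
    (he3 : ∀ i, e i i =
      ∑ j ∈ Finset.univ.erase i, ((μ (A i)).toReal + (μ (A j)).toReal - e i j))
    (he4 : ∀ i, e i i =
      ∑ j ∈ Finset.univ.erase i, ((μ (A i)).toReal + (μ (A j)).toReal - e j i))
    (C : Fin k → Set X) (hCmeas : ∀ i, MeasurableSet (C i))
    (hCsub : ∀ i, C i ⊆ A i)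
    (hCeq : ∀ i j, μ (C i) = μ (C j))
    (hee : ∀ i, e i i < 2 * (μ (C 0)).toReal) :
    ∃ B : Fin k → Set X, (∀ i, MeasurableSet (B i)) ∧
      Pairwise (Function.onFun Disjoint B) ∧ (⋃ i, B i = Set.univ) ∧
      (∀ i, μ (B i) = μ (A i)) ∧
      (∀ i j, (μ (symmDiff (B i) (A j))).toReal = e i j) ∧
      (∀ i j, i ≠ j → B i ∩ A j ⊆ C j) ∧
      (∀ i, A i \ B i ⊆ C i) := by
  classical
  simp only [← measureReal_def] at he2 he3 he4 hee ⊢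
  have hmass : ∀ i j, 0 ≤ (μ.real (A i) + μ.real (A j) - e j i) / 2 := fun i j => by
    linarith [he2 j i]
  have hfit : ∀ i, ∑ j ∈ Finset.univ.erase i, (μ.real (A i) + μ.real (A j) - e j i) / 2 ≤
      μ.real (C i) := fun i => by
    rw [← Finset.sum_div, ← he4 i, measureReal_def, hCeq i 0, ← measureReal_def]
    linarith [hee i]
  choose P hPm hPd hPcover hPC using fun i => exists_partition_measureReal_eq_of_ne hdiv
    (hAmeas i) (hCmeas i) (hCsub i) i _ (hmass i) (hfit i)
  have hPA : ∀ i j, P i j ⊆ A i := fun i j => hPcover i ▸ subset_iUnion (P i) j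
  have hBA := iUnion_inter_eq_of_pairwise_disjoint hAdisj hPA
  have hrow : ∀ i, ∑ j, μ.real (P i j) = μ.real (A i) := fun i => by
    rw [← measureReal_iUnion_fintype (hPd i) (hPm i), hPcover]
  have hp := fun i j h => (hPC i j h).2
  have hB : ∀ j, μ.real (⋃ i, P i j) = μ.real (A j) := fun j => by
    rw [measureReal_iUnion_fintype (fun i i' h => (hAdisj h).mono (hPA i j) (hPA i' j))
      fun i => hPm i j]
    exact PAdditive.sum_col_eq he3 he4 hrow hp j
  refine ⟨fun j => ⋃ i, P i j, fun j => .iUnion fun i => hPm i j,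
    pairwise_disjoint_iUnion_swap hAdisj hPA hPd, by rw [iUnion_comm]; simp_rw [hPcover, hAcover],
    fun j => (measureReal_eq_measureReal_iff).1 (hB j), fun j i => ?_,
    fun j i hji => (hBA i j).le.trans (hPC i j hji).1,
    fun i => (sdiff_iUnion_subset_iUnion_ne hPcover i).trans
      (iUnion₂_subset fun j hj => (hPC i j hj).1)⟩
  rw [measureReal_symmDiff_eq_add_sub_two_mul_inter (.iUnion fun l => hPm l j) (hAmeas i), hB,
    hBA]
  exact PAdditive.add_sub_two_mul_eq he4 hrow hp i j

/-- Realization of a `P`-additive matrix: given a partition `(A i)` of a standard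
probability space into positive-measure sets, sets `C i ⊆ A i` of equal positive
measure, and a `P`-additive matrix `e` with `e i i < 2 μ(C 0)`, there is a partition
`(B i)` with `μ(B i) = μ(A i)`, `μ(B i Δ A j) = e i j`, `B i ∩ A j ⊆ C j` for `i ≠ j`,
and `A i \ B i ⊆ C i`. -/
theorem realize_additive_matrix {X : Type*} [MeasurableSpace X] (μ : Measure X)
    [IsProbabilityMeasure μ]
    (hdiv : ∀ (s : Set X) (r : ENNReal), MeasurableSet s → r ≤ μ s →
      ∃ t ⊆ s, MeasurableSet t ∧ μ t = r)
    (k : ℕ) [NeZero k] (A : Fin k → Set X) (hAmeas : ∀ i, MeasurableSet (A i))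
    (hAdisj : Pairwise (Function.onFun Disjoint A)) (hAcover : ⋃ i, A i = Set.univ)
    (hApos : ∀ i, 0 < μ (A i))
    (e : Fin k → Fin k → ℝ)
    (he1 : ∀ i j, 0 ≤ e i j)
    (he2 : ∀ i j, e i j ≤ (μ (A i)).toReal + (μ (A j)).toReal)
    (he3 : ∀ i, e i i =
      ∑ j ∈ Finset.univ.erase i, ((μ (A i)).toReal + (μ (A j)).toReal - e i j))
    (he4 : ∀ i, e i i =
      ∑ j ∈ Finset.univ.erase i, ((μ (A i)).toReal + (μ (A j)).toReal - e j i))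
    (C : Fin k → Set X) (hCmeas : ∀ i, MeasurableSet (C i))
    (hCsub : ∀ i, C i ⊆ A i) (hCpos : 0 < μ (C 0))
    (hCeq : ∀ i j, μ (C i) = μ (C j))
    (hee : ∀ i, e i i < 2 * (μ (C 0)).toReal) :
    ∃ B : Fin k → Set X, (∀ i, MeasurableSet (B i)) ∧
      Pairwise (Function.onFun Disjoint B) ∧ (⋃ i, B i = Set.univ) ∧
      (∀ i, μ (B i) = μ (A i)) ∧
      (∀ i j, (μ (symmDiff (B i) (A j))).toReal = e i j) ∧
      (∀ i j, i ≠ j → B i ∩ A j ⊆ C j) ∧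
      (∀ i, A i \ B i ⊆ C i) :=
  realize_additive_matrix_general μ hdiv k A hAmeas hAdisj hAcover e he2 he3 he4 C hCmeas hCsub hCeq
    hee
end

section
/- Let v be a unit vector in ℓ² and H ⊆ ℓ² a closed infinite-dimensional subspace with π_H(v) ≠ 0, where π_H is the orthogonal projection onto H. Then there exists ε > 0 such that for every unit vector v' with ‖v' − v‖ < ε, there exists a unit vector v'' with v'' − v ∈ H and ‖v'' − v‖ = ‖v' − v‖. -/
/-!
Writing `v'' = v + w`, the condition `‖v''‖ = 1` becomes `2⟪v, w⟫ = -‖w‖²`, so it suffices to find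
`w ∈ K` with `‖w‖ = t` and `⟪w, v⟫ = -t²/2`. Take a unit `e ∈ K` with `δ = ⟪e, v⟫ > 0` and, since `K`
is infinite-dimensional, a unit `u ∈ K` orthogonal to both `e` and `v`. On the circle of radius `t`
in the plane spanned by `e` and `u`, `⟪·, v⟫` takes every value in `[-δt, δt]`, which contains
`-t²/2` as soon as `t ≤ 2δ`; hence `ε = 2δ` works.
-/

open RealInnerProductSpace

theorem Submodule.exists_norm_eq_one_forall_inner_eq_zero {𝕜 E ι : Type*} [RCLike 𝕜]
    [NormedAddCommGroup E] [InnerProductSpace 𝕜 E] [Finite ι] {K : Submodule 𝕜 E}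
    (hK : ¬FiniteDimensional 𝕜 K) (x : ι → E) :
    ∃ u ∈ K, ‖u‖ = 1 ∧ ∀ i, inner 𝕜 (x i) u = 0 := by
  let f : K →ₗ[𝕜] ι → 𝕜 := LinearMap.pi fun i => (innerₛₗ 𝕜 (x i)).comp K.subtype
  have hker : LinearMap.ker f ≠ ⊥ := fun h =>
    hK (Module.Finite.of_injective f (LinearMap.ker_eq_bot.mp h))
  obtain ⟨u, hu, hu0⟩ := Submodule.exists_mem_ne_zero_of_ne_bot hker
  have hu0' : (u : E) ≠ 0 := by simpa using hu0
  refine ⟨(‖(u : E)‖ : 𝕜)⁻¹ • (u : E), K.smul_mem _ u.2, norm_smul_inv_norm hu0', fun i => ?_⟩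
  rw [inner_smul_right, show inner 𝕜 (x i) (u : E) = 0 from congrFun hu i, mul_zero]

theorem Submodule.exists_norm_eq_one_inner_pos_of_notMem_orthogonal {E : Type*}
    [NormedAddCommGroup E] [InnerProductSpace ℝ E] {K : Submodule ℝ E} {v : E} (hv : v ∉ Kᗮ) :
    ∃ e ∈ K, ‖e‖ = 1 ∧ 0 < ⟪e, v⟫ := by
  obtain ⟨x, hxK, hxv⟩ : ∃ x ∈ K, ⟪x, v⟫ ≠ 0 := by
    simpa [Submodule.mem_orthogonal] using hv
  have hy : 0 < ⟪⟪x, v⟫ • x, v⟫ := by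
    rw [real_inner_smul_left]; exact mul_self_pos.mpr hxv
  have hy0 : ⟪x, v⟫ • x ≠ 0 := fun h => hy.ne' (by rw [h, inner_zero_left])
  refine ⟨‖⟪x, v⟫ • x‖⁻¹ • ⟪x, v⟫ • x, K.smul_mem _ (K.smul_mem _ hxK),
    norm_smul_inv_norm (𝕜 := ℝ) hy0, ?_⟩
  rw [real_inner_smul_left]
  positivity

theorem exists_norm_eq_inner_eq_of_orthonormal {E : Type*}
    [NormedAddCommGroup E] [InnerProductSpace ℝ E] {e u v : E} (he : ‖e‖ = 1) (hu : ‖u‖ = 1)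
    (heu : ⟪e, u⟫ = 0) (huv : ⟪u, v⟫ = 0) (hev : 0 < ⟪e, v⟫) {s t : ℝ} (ht : 0 ≤ t)
    (hs : |s| ≤ ⟪e, v⟫ * t) :
    ∃ a b : ℝ, ‖a • e + b • u‖ = t ∧ ⟪a • e + b • u, v⟫ = s := by
  set a := s / ⟪e, v⟫
  have ha : a ^ 2 ≤ t ^ 2 := by
    rw [sq_le_sq, abs_of_nonneg ht, abs_div, abs_of_pos hev, div_le_iff₀ hev]
    linarith
  refine ⟨a, √(t ^ 2 - a ^ 2), ?_, ?_⟩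
  · have hsq : ‖a • e + √(t ^ 2 - a ^ 2) • u‖ ^ 2 = t ^ 2 := by
      rw [norm_add_sq_real, norm_smul, norm_smul, real_inner_smul_left, real_inner_smul_right,
        heu, he, hu, Real.norm_eq_abs, Real.norm_eq_abs]
      simp only [mul_one, mul_zero, add_zero, sq_abs, Real.sq_sqrt (sub_nonneg.mpr ha)]
      ring
    exact (sq_eq_sq₀ (norm_nonneg _) ht).mp hsq
  · rw [inner_add_left, real_inner_smul_left, real_inner_smul_left, huv, mul_zero, add_zero]
    exact div_mul_cancel₀ s hev.ne'

theorem norm_add_eq_norm_of_two_inner_add_sq_eq_zero {E : Type*}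
    [NormedAddCommGroup E] [InnerProductSpace ℝ E] {v w : E} (h : 2 * ⟪v, w⟫ + ‖w‖ ^ 2 = 0) :
    ‖v + w‖ = ‖v‖ := by
  refine (sq_eq_sq₀ (norm_nonneg _) (norm_nonneg _)).mp ?_
  rw [norm_add_sq_real]
  linarith

theorem unit_vector_perturbation_general {H : Type*} [NormedAddCommGroup H]
    [InnerProductSpace ℝ H]
    (v : H) (hv : ‖v‖ = 1) (K : Submodule ℝ H)
    (hKinf : ¬FiniteDimensional ℝ K) (hproj : v ∉ Kᗮ) :
    ∃ ε > (0 : ℝ), ∀ v' : H, ‖v'‖ = 1 → ‖v' - v‖ < ε →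
      ∃ v'' : H, ‖v''‖ = 1 ∧ v'' - v ∈ K ∧ ‖v'' - v‖ = ‖v' - v‖ := by
  obtain ⟨e, heK, he, hev⟩ := K.exists_norm_eq_one_inner_pos_of_notMem_orthogonal hproj
  obtain ⟨u, huK, hu, hu_perp⟩ := K.exists_norm_eq_one_forall_inner_eq_zero hKinf ![e, v]
  refine ⟨2 * ⟪e, v⟫, by positivity, fun v' _ hv' => ?_⟩
  set t := ‖v' - v‖
  have hs : |-(t ^ 2 / 2)| ≤ ⟪e, v⟫ * t := by
    rw [abs_neg, abs_of_nonneg (by positivity)]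
    nlinarith [norm_nonneg (v' - v)]
  obtain ⟨a, b, hwt, hwv⟩ := exists_norm_eq_inner_eq_of_orthonormal he hu (hu_perp 0)
    (real_inner_comm v u ▸ hu_perp 1) hev (norm_nonneg _) hs
  refine ⟨v + (a • e + b • u), ?_, ?_, by simpa using hwt⟩
  · rw [norm_add_eq_norm_of_two_inner_add_sq_eq_zero, hv]
    rw [real_inner_comm, hwv, hwt]
    ring
  · simpa using K.add_mem (K.smul_mem a heK) (K.smul_mem b huK)

/-- If `v` is a unit vector of `ℓ²` and `K` a closed infinite-dimensional subspace
with nonzero projection of `v` (i.e. `v ∉ Kᗮ`), then there is `ε > 0` such that any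
unit vector `v'` with `‖v' − v‖ < ε` can be matched by a unit vector `v''` with
`v'' − v ∈ K` and `‖v'' − v‖ = ‖v' − v‖`. -/
theorem unit_vector_perturbation {H : Type*} [NormedAddCommGroup H]
    [InnerProductSpace ℝ H] [CompleteSpace H] [TopologicalSpace.SeparableSpace H]
    (hinf : ¬FiniteDimensional ℝ H)
    (v : H) (hv : ‖v‖ = 1) (K : Submodule ℝ H) (hK : IsClosed (K : Set H))
    (hKinf : ¬FiniteDimensional ℝ K) (hproj : v ∉ Kᗮ) :
    ∃ ε > (0 : ℝ), ∀ v' : H, ‖v'‖ = 1 → ‖v' - v‖ < ε →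
      ∃ v'' : H, ‖v''‖ = 1 ∧ v'' - v ∈ K ∧ ‖v'' - v‖ = ‖v' - v‖ :=
  unit_vector_perturbation_general v hv K hKinf hproj
end

section
/- Let A, B, C be finite-dimensional subspaces of ℓ² with C ⊆ A ∩ B such that (A ⊖ C) ⊥ (B ⊖ C), where A ⊖ C denotes the orthogonal complement of C within A. Then for every pair of linear isometries φ : A → A, ψ : B → B with φ(C) = C = ψ(C) and φ|_C = ψ|_C, there exists a linear isometry of the subspace spanned by A ∪ B extending both φ and ψ. -/
open scoped RealInnerProductSpace

/-! With `D = B ⊓ Cᗮ`, the splitting `A = C ⊕ (A ⊓ Cᗮ)` gives `A ⟂ D`, and `B = C ⊕ D` gives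
`A ⊔ B = A ⊔ D`. An isometry of the finite-dimensional space `C` into itself is onto, so `ψ`
preserves `Cᗮ` and maps `D` into `D`, which is orthogonal to `φ(A) ⊆ A`. Hence `φ` on `A` plus
`ψ` on `D` is an isometry of `A ⊔ D`; it agrees with `ψ` on `B = C ⊕ D` since `φ = ψ` on `C`. -/

section

variable {𝕜 E F : Type*} [RCLike 𝕜] [NormedAddCommGroup E] [InnerProductSpace 𝕜 E]
  [NormedAddCommGroup F] [InnerProductSpace 𝕜 F]

theorem norm_add_eq_norm_add_of_inner_eq_zero {x y : E} {x' y' : F}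
    (hxy : inner 𝕜 x y = 0) (hxy' : inner 𝕜 x' y' = 0) (hx : ‖x'‖ = ‖x‖) (hy : ‖y'‖ = ‖y‖) :
    ‖x' + y'‖ = ‖x + y‖ := by
  rw [← mul_self_inj (norm_nonneg _) (norm_nonneg _),
    norm_add_sq_eq_norm_sq_add_norm_sq_of_inner_eq_zero x y hxy,
    norm_add_sq_eq_norm_sq_add_norm_sq_of_inner_eq_zero x' y' hxy', hx, hy]

theorem LinearIsometry.exists_extension_sup_of_isOrtho {U V : Submodule 𝕜 E} (hUV : U ⟂ V)
    (f : U →ₗᵢ[𝕜] F) (g : V →ₗᵢ[𝕜] F) (hfg : ∀ u v, inner 𝕜 (f u) (g v) = 0) :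
    ∃ χ : ↥(U ⊔ V) →ₗᵢ[𝕜] F,
      ∀ (u : U) (v : V) (z : ↥(U ⊔ V)), (z : E) = u + v → χ z = f u + g v := by
  let χ := LinearPMap.sup ⟨U, f.toLinearMap⟩ ⟨V, g.toLinearMap⟩
    (LinearPMap.sup_h_of_disjoint _ _ hUV.disjoint)
  have hχ (u : U) (v : V) (z : ↥(U ⊔ V)) (hz : (z : E) = u + v) : χ z = f u + g v :=
    LinearPMap.sup_apply (f := ⟨U, f.toLinearMap⟩) (g := ⟨V, g.toLinearMap⟩) _ u v z hz.symm
  refine ⟨⟨χ.toFun, fun z => ?_⟩, hχ⟩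
  obtain ⟨u, hu, v, hv, huv⟩ := Submodule.mem_sup.mp z.2
  change ‖χ z‖ = ‖(z : E)‖
  rw [hχ ⟨u, hu⟩ ⟨v, hv⟩ z huv.symm, ← huv]
  exact norm_add_eq_norm_add_of_inner_eq_zero (hUV.inner_eq hu hv) (hfg _ _)
    (f.norm_map _) (g.norm_map _)

end

namespace Submodule

variable {𝕜 E : Type*} [RCLike 𝕜] [NormedAddCommGroup E] [InnerProductSpace 𝕜 E]

theorem isOrtho_inf_orthogonal_of_isOrtho {A B C : Submodule 𝕜 E} [C.HasOrthogonalProjection]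
    (hCA : C ≤ A) (h : A ⊓ Cᗮ ⟂ B ⊓ Cᗮ) : A ⟂ B ⊓ Cᗮ := by
  rw [← sup_orthogonal_inf_of_hasOrthogonalProjection hCA, isOrtho_sup_left, inf_comm Cᗮ]
  exact ⟨(isOrtho_orthogonal_right C).mono_right inf_le_right, h⟩

end Submodule

namespace LinearIsometry

variable {𝕜 E : Type*} [RCLike 𝕜] [NormedAddCommGroup E] [InnerProductSpace 𝕜 E]
  {B C : Submodule 𝕜 E}

theorem surjOn_of_mapsTo [FiniteDimensional 𝕜 C] (hCB : C ≤ B) (ψ : B →ₗᵢ[𝕜] E)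
    (hψC : Set.MapsTo ψ {x | (x : E) ∈ C} C) : Set.SurjOn ψ {x | (x : E) ∈ C} C := by
  let ψC : C →ₗ[𝕜] C :=
    (ψ.toLinearMap ∘ₗ Submodule.inclusion hCB).codRestrict C fun c => hψC c.2
  have hinj : Function.Injective ψC :=
    (LinearMap.injective_codRestrict_iff _).mpr
      (ψ.injective.comp (Submodule.inclusion_injective hCB))
  intro c hc
  obtain ⟨c', hc'⟩ := LinearMap.surjective_of_injective hinj ⟨c, hc⟩
  exact ⟨Submodule.inclusion hCB c', c'.2, congrArg Subtype.val hc'⟩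

theorem map_mem_orthogonal_of_mapsTo [FiniteDimensional 𝕜 C] (hCB : C ≤ B) (ψ : B →ₗᵢ[𝕜] E)
    (hψC : Set.MapsTo ψ {x | (x : E) ∈ C} C) {b : B} (hb : (b : E) ∈ Cᗮ) : ψ b ∈ Cᗮ := by
  intro c hc
  obtain ⟨x, hx, rfl⟩ := surjOn_of_mapsTo hCB ψ hψC hc
  rw [ψ.inner_map_map]
  exact hb x hx

end LinearIsometry

theorem orthogonal_independence_general {H : Type*} [NormedAddCommGroup H]
    [InnerProductSpace ℝ H]
    (A B C : Submodule ℝ H)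
    [FiniteDimensional ℝ C]
    (hC : C ≤ A ⊓ B)
    (horth : ∀ x ∈ A ⊓ Cᗮ, ∀ y ∈ B ⊓ Cᗮ, ⟪x, y⟫ = 0)
    (φ : A →ₗᵢ[ℝ] H) (hφA : ∀ x : A, φ x ∈ A)
    (ψ : B →ₗᵢ[ℝ] H) (hψB : ∀ x : B, ψ x ∈ B)
    (hψC : ∀ x : B, (x : H) ∈ C → ψ x ∈ C)
    (hagree : ∀ (x : A) (y : B), (x : H) = (y : H) → (x : H) ∈ C → φ x = ψ y) :
    ∃ χ : ↥(A ⊔ B) →ₗᵢ[ℝ] H,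
      (∀ z : ↥(A ⊔ B), χ z ∈ A ⊔ B) ∧
      (∀ (x : A) (z : ↥(A ⊔ B)), (x : H) = (z : H) → χ z = φ x) ∧
      (∀ (y : B) (z : ↥(A ⊔ B)), (y : H) = (z : H) → χ z = ψ y) := by
  obtain ⟨hCA, hCB⟩ := le_inf_iff.mp hC
  have hB : C ⊔ B ⊓ Cᗮ = B := by
    rw [inf_comm]; exact Submodule.sup_orthogonal_inf_of_hasOrthogonalProjection hCB
  set D := B ⊓ Cᗮ
  have hAD : A ⟂ D := Submodule.isOrtho_inf_orthogonal_of_isOrtho hCA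
    (Submodule.isOrtho_iff_inner_eq.mpr horth)
  have hψD (d : B) (hd : (d : H) ∈ D) : ψ d ∈ D :=
    ⟨hψB d, ψ.map_mem_orthogonal_of_mapsTo hCB hψC hd.2⟩
  have hsup : A ⊔ B = A ⊔ D := by rw [← hB, ← sup_assoc, sup_eq_left.mpr hCA]
  let ψD : D →ₗᵢ[ℝ] H := ψ.comp ⟨Submodule.inclusion inf_le_left, fun _ => rfl⟩
  obtain ⟨χ, hχ⟩ := φ.exists_extension_sup_of_isOrtho hAD ψD fun x d =>
    hAD.inner_eq (hφA x) (hψD _ d.2)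
  rw [hsup]
  refine ⟨χ, fun z => ?_, fun x z hxz => ?_, fun y z hyz => ?_⟩
  · obtain ⟨x, hx, d, hd, hz⟩ := Submodule.mem_sup.mp z.2
    rw [hχ ⟨x, hx⟩ ⟨d, hd⟩ z hz.symm]
    exact Submodule.add_mem_sup (hφA _) (hψD _ hd)
  · rw [hχ x 0 z (by simp [hxz]), map_zero, add_zero]
  · obtain ⟨c, hc, d, hd, hy⟩ := Submodule.mem_sup.mp (hB.symm ▸ y.2 : (y : H) ∈ C ⊔ D)
    rw [hχ ⟨c, hCA hc⟩ ⟨d, hd⟩ z (by rw [← hyz, hy]), hagree _ ⟨c, hCB hc⟩ rfl hc]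
    change ψ _ + ψ ⟨d, hd.1⟩ = ψ y
    rw [← map_add]
    exact congrArg ψ (Subtype.ext hy)

/-- Independence of orthogonal subspaces over a common subspace: if `A ⊖ C ⊥ B ⊖ C`,
then any pair of linear isometries of `A` and of `B` preserving `C` and agreeing on
`C` extends to a linear isometry of the span of `A ∪ B`. -/
theorem orthogonal_independence {H : Type*} [NormedAddCommGroup H]
    [InnerProductSpace ℝ H] [CompleteSpace H] [TopologicalSpace.SeparableSpace H]
    (A B C : Submodule ℝ H)
    [FiniteDimensional ℝ A] [FiniteDimensional ℝ B] [FiniteDimensional ℝ C]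
    (hC : C ≤ A ⊓ B)
    (horth : ∀ x ∈ A ⊓ Cᗮ, ∀ y ∈ B ⊓ Cᗮ, ⟪x, y⟫ = 0)
    (φ : A →ₗᵢ[ℝ] H) (hφA : ∀ x : A, φ x ∈ A)
    (hφC : ∀ x : A, (x : H) ∈ C → φ x ∈ C)
    (ψ : B →ₗᵢ[ℝ] H) (hψB : ∀ x : B, ψ x ∈ B)
    (hψC : ∀ x : B, (x : H) ∈ C → ψ x ∈ C)
    (hagree : ∀ (x : A) (y : B), (x : H) = (y : H) → (x : H) ∈ C → φ x = ψ y) :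
    ∃ χ : ↥(A ⊔ B) →ₗᵢ[ℝ] H,
      (∀ z : ↥(A ⊔ B), χ z ∈ A ⊔ B) ∧
      (∀ (x : A) (z : ↥(A ⊔ B)), (x : H) = (z : H) → χ z = φ x) ∧
      (∀ (y : B) (z : ↥(A ⊔ B)), (y : H) = (z : H) → χ z = ψ y) :=
  orthogonal_independence_general A B C hC horth φ hφA ψ hψB hψC hagree
end

section
/- Let A, B, C be finite-dimensional subspaces of an infinite-dimensional Hilbert space ℓ² with C ⊆ A ∩ B. Then there exists a linear isometry ι : B → ℓ² fixing C pointwise such that (ι(B) ⊖ C) ⊥ A. -/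
open scoped RealInnerProductSpace
open Module

/-- Extension property of the Hilbert space: given finite-dimensional subspaces
`A, B, C` with `C ⊆ A ∩ B`, there is a linear isometry `ι : B → ℓ²` fixing `C`
pointwise with `(ι(B) ⊖ C) ⊥ A`. -/
theorem hilbert_extension_property {H : Type*} [NormedAddCommGroup H]
    [InnerProductSpace ℝ H] [CompleteSpace H] [TopologicalSpace.SeparableSpace H]
    (hinf : ¬FiniteDimensional ℝ H)
    (A B C : Submodule ℝ H)
    [FiniteDimensional ℝ A] [FiniteDimensional ℝ B] [FiniteDimensional ℝ C]
    (hC : C ≤ A ⊓ B) :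
    ∃ ι : B →ₗᵢ[ℝ] H,
      (∀ x : B, (x : H) ∈ C → ι x = (x : H)) ∧
      (∀ x : H, x ∈ LinearMap.range ι.toLinearMap → x ∈ Cᗮ →
        ∀ y ∈ A, ⟪x, y⟫ = 0) := by
  have hCA : C ≤ A := hC.trans inf_le_left
  have hCB : C ≤ B := hC.trans inf_le_right
  -- Aᗮ is infinite dimensional
  have h1 : ¬FiniteDimensional ℝ ↥Aᗮ := by
    intro h
    have htop : A ⊔ Aᗮ = ⊤ := Submodule.sup_orthogonal_of_hasOrthogonalProjection
    have h2 : FiniteDimensional ℝ ↥(A ⊔ Aᗮ) := Submodule.finiteDimensional_sup A Aᗮ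
    rw [htop] at h2
    exact hinf (Submodule.topEquiv (R := ℝ) (M := H)).finiteDimensional
  -- D = B ⊓ Cᗮ
  set D : Submodule ℝ H := B ⊓ Cᗮ with hD
  haveI : FiniteDimensional ℝ D := Submodule.finiteDimensional_inf_left B Cᗮ
  set n : ℕ := finrank ℝ D with hn
  -- find a subspace W of Aᗮ of dimension n
  have hrank : (n : Cardinal) ≤ Module.rank ℝ ↥Aᗮ := by
    refine (Cardinal.nat_lt_aleph0 n).le.trans (le_of_not_gt fun hlt => h1 ?_)
    exact IsNoetherian.iff_fg.mp (IsNoetherian.iff_rank_lt_aleph0.mpr hlt)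
  obtain ⟨f, hf⟩ := natCast_le_rank_iff.mp hrank
  set W : Submodule ℝ ↥Aᗮ := Submodule.span ℝ (Set.range f) with hW
  have hWrank : finrank ℝ W = n := by rw [finrank_span_eq_card hf, Fintype.card_fin]
  -- isometry g : D →ₗᵢ H with range in Aᗮ
  haveI : FiniteDimensional ℝ W := FiniteDimensional.span_of_finite ℝ (Set.finite_range f)
  let e : D ≃ₗᵢ[ℝ] W :=
    (stdOrthonormalBasis ℝ D).repr.trans
      ((stdOrthonormalBasis ℝ W).reindex (finCongr (by rw [hWrank]))).repr.symm
  let g : D →ₗᵢ[ℝ] H := (Aᗮ.subtypeₗᵢ.comp W.subtypeₗᵢ).comp e.toLinearIsometry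
  have hg_mem : ∀ d : D, g d ∈ Aᗮ := fun d => ((e d : ↥Aᗮ)).2
  have hg_perpC : ∀ d : D, g d ∈ Cᗮ := fun d => Submodule.orthogonal_le hCA (hg_mem d)
  -- projection onto C
  let P : H →L[ℝ] C := Submodule.orthogonalProjectionOnto C
  -- define the map
  let toD : B →ₗ[ℝ] D := LinearMap.codRestrict D
    ((Submodule.subtype B) - (C.subtype.comp (P.toLinearMap.comp (Submodule.subtype B))))
    (by
      intro b
      refine ⟨?_, ?_⟩
      · exact Submodule.sub_mem B b.2 (hCB (P (b : H)).2)
      · exact Submodule.sub_starProjection_mem_orthogonal (K := C) (b : H))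
  let T : B →ₗ[ℝ] H := (C.subtype.comp (P.toLinearMap.comp (Submodule.subtype B)))
    + (g.toLinearMap.comp toD)
  have hT : ∀ b : B, T b = (P (b : H) : H) + g (toD b) := fun b => rfl
  have htoD : ∀ b : B, (toD b : H) = (b : H) - (P (b : H) : H) := fun b => rfl
  have hnorm : ∀ b : B, ‖T b‖ = ‖b‖ := by
    intro b
    have horth : ⟪(P (b : H) : H), g (toD b)⟫ = 0 :=
      (hg_perpC (toD b)) _ (P (b : H)).2
    have horth2 : ⟪(P (b : H) : H), (b : H) - (P (b : H) : H)⟫ = 0 :=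
      Submodule.sub_starProjection_mem_orthogonal (K := C) (b : H) _ (P (b : H)).2
    have hb : (b : H) = (P (b : H) : H) + ((b : H) - (P (b : H) : H)) := by abel
    have h1 : ‖T b‖ ^ 2 = ‖(P (b : H) : H)‖ ^ 2 + ‖g (toD b)‖ ^ 2 := by
      rw [hT, norm_add_sq_real, horth]; ring
    have h2 : ‖(b : H)‖ ^ 2 = ‖(P (b : H) : H)‖ ^ 2 + ‖(b : H) - (P (b : H) : H)‖ ^ 2 := by
      conv_lhs => rw [hb]
      rw [norm_add_sq_real, horth2]; ring
    have h3 : ‖g (toD b)‖ = ‖(b : H) - (P (b : H) : H)‖ := by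
      rw [g.norm_map]
      show ‖(toD b : H)‖ = _
      rw [htoD]
    have hsq : ‖T b‖ ^ 2 = ‖(b : H)‖ ^ 2 := by rw [h1, h2, h3]
    have := congrArg Real.sqrt hsq
    rwa [Real.sqrt_sq (norm_nonneg _), Real.sqrt_sq (norm_nonneg _)] at this
  refine ⟨⟨T, hnorm⟩, ?_, ?_⟩
  · intro b hb
    show T b = (b : H)
    have hP : P (b : H) = ⟨(b : H), hb⟩ :=
      Subtype.ext (Submodule.starProjection_eq_self_iff.mpr hb)
    have hzero : toD b = 0 := by
      apply Subtype.ext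
      rw [htoD, hP]
      simp
    rw [hT, hzero, map_zero, hP]
    simp
  · rintro x ⟨b, rfl⟩ hx y hy
    show ⟪T b, y⟫ = 0
    have hmem : T b - g (toD b) ∈ C := by rw [hT]; simp
    -- T b ∈ Cᗮ and g(toD b) ∈ Cᗮ so the C-part is 0
    have hgC : g (toD b) ∈ Cᗮ := hg_perpC _
    have hdiff : T b - g (toD b) ∈ Cᗮ := Submodule.sub_mem _ hx hgC
    have h0 : T b - g (toD b) = 0 := by
      have := Submodule.inf_orthogonal_eq_bot C
      have : T b - g (toD b) ∈ C ⊓ Cᗮ := ⟨hmem, hdiff⟩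
      rwa [Submodule.inf_orthogonal_eq_bot, Submodule.mem_bot] at this
    rw [sub_eq_zero] at h0
    rw [h0, real_inner_comm]
    exact hg_mem (toD b) y hy
end

section
/- In a standard probability space (X, μ), for every finite measurable partition (A₁,…,A_k) into positive measure sets and every positive measure set E ⊆ X, the set of tuples (B₁,…,B_k) forming a measurable partition with μ(Bᵢ) = μ(Aᵢ) for all i and μ(Bᵢ ∩ E) = 0 for a fixed i is closed and nowhere dense in the space of all such partitions, where the metric on partitions is d((Bᵢ),(Bᵢ')) = maxᵢ μ(Bᵢ Δ Bᵢ'). -/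
/-!
Closedness: `μ (B i₀ ∩ E) ≤ μ (B' i₀ ∩ E) + μ (B i₀ ∆ B' i₀)`, so a partition approximated by
partitions with `μ (B' i₀ ∩ E) = 0` has the same property.

Empty interior: if `μ (B i₀ ∩ E) = 0`, some other piece `B j` meets `E` in positive measure,
while `B i₀ \ E` has the full, positive, measure of `B i₀`. Using the divisibility of `μ`, pick
small sets `S ⊆ B j ∩ E` and `T ⊆ B i₀ \ E` of the same measure and exchange them between the
two pieces. This keeps every measure, moves every piece by at most `μ (S ∪ T)`, and makes the
new `i₀`-th piece contain `S ⊆ E`.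
-/

open MeasureTheory Set
open scoped symmDiff ENNReal

section

variable {X ι : Type*}

def permuteOn (B : ι → Set X) (σ : Equiv.Perm ι) (U : Set X) (k : ι) : Set X :=
  U.ite (B (σ k)) (B k)

variable {B : ι → Set X} {σ : Equiv.Perm ι} {U : Set X}

lemma symmDiff_permuteOn_subset (k : ι) : B k ∆ permuteOn B σ U k ⊆ U := by
  intro x hx
  by_contra hxU
  simp [permuteOn, Set.ite, hxU, symmDiff] at hx

lemma pairwise_disjoint_permuteOn (hB : Pairwise (Function.onFun Disjoint B)) :
    Pairwise (Function.onFun Disjoint (permuteOn B σ U)) := by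
  intro k l hkl
  refine Set.disjoint_left.2 fun x hk hl => ?_
  by_cases hx : x ∈ U
  · simp only [permuteOn, Set.ite, hx, mem_union, mem_inter_iff, and_true, mem_sdiff,
      not_true_eq_false, and_false, or_false] at hk hl
    exact Set.disjoint_left.1 (hB (σ.injective.ne hkl)) hk hl
  · simp only [permuteOn, Set.ite, hx, mem_union, mem_inter_iff, and_false, mem_sdiff,
      not_false_eq_true, and_true, false_or] at hk hl
    exact Set.disjoint_left.1 (hB hkl) hk hl

lemma iUnion_permuteOn (hB : ⋃ i, B i = univ) : ⋃ k, permuteOn B σ U k = univ := by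
  refine eq_univ_of_forall fun x => ?_
  obtain ⟨i, hi⟩ := mem_iUnion.1 (hB ▸ mem_univ x)
  by_cases hx : x ∈ U
  · exact mem_iUnion.2 ⟨σ.symm i, by simp [permuteOn, Set.ite, hx, hi]⟩
  · exact mem_iUnion.2 ⟨i, by simp [permuteOn, Set.ite, hx, hi]⟩

variable [MeasurableSpace X] {μ : Measure X}

lemma measure_permuteOn (hU : MeasurableSet U) {k : ι} (h : μ (B (σ k) ∩ U) = μ (B k ∩ U)) :
    μ (permuteOn B σ U k) = μ (B k) := by
  rw [← measure_inter_add_sdiff _ hU, permuteOn, ite_inter_self, ite_sdiff_self, h,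
    measure_inter_add_sdiff _ hU]

lemma measure_swap_inter_eq [DecidableEq ι] {i j : ι} (h : μ (B i ∩ U) = μ (B j ∩ U)) (k : ι) :
    μ (B (Equiv.swap i j k) ∩ U) = μ (B k ∩ U) := by
  rcases eq_or_ne k i with rfl | hi
  · simp [h]
  rcases eq_or_ne k j with rfl | hj
  · simp [h]
  rw [Equiv.swap_apply_of_ne_of_ne hi hj]

def IsPartitionWithMeasures (μ : Measure X) (m : ι → ℝ≥0∞) (B : ι → Set X) : Prop :=
  (∀ i, MeasurableSet (B i)) ∧ Pairwise (Function.onFun Disjoint B) ∧ (⋃ i, B i = univ) ∧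
    ∀ i, μ (B i) = m i

lemma IsPartitionWithMeasures.permuteOn {m : ι → ℝ≥0∞} (hB : IsPartitionWithMeasures μ m B)
    (σ : Equiv.Perm ι) (hU : MeasurableSet U)
    (h : ∀ k, μ (B (σ k) ∩ U) = μ (B k ∩ U)) :
    IsPartitionWithMeasures μ m (permuteOn B σ U) :=
  ⟨fun k => hU.ite (hB.1 _) (hB.1 k), pairwise_disjoint_permuteOn hB.2.1,
    iUnion_permuteOn hB.2.2.1, fun k => (measure_permuteOn hU (h k)).trans (hB.2.2.2 k)⟩

noncomputable def partitionDist (μ : Measure X) (B B' : ι → Set X) : ℝ :=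
  ⨆ i, μ.real (B i ∆ B' i)

lemma partitionDist_self (B : ι → Set X) : partitionDist μ B B = 0 := by
  simp [partitionDist]

lemma measureReal_symmDiff_le_partitionDist [Finite ι] (B B' : ι → Set X) (i : ι) :
    μ.real (B i ∆ B' i) ≤ partitionDist μ B B' :=
  le_ciSup (f := fun i => μ.real (B i ∆ B' i)) (Set.finite_range _).bddAbove i

lemma partitionDist_le_of_symmDiff_subset [IsFiniteMeasure μ] {B' : ι → Set X}
    (h : ∀ i, B i ∆ B' i ⊆ U) : partitionDist μ B B' ≤ μ.real U :=
  Real.iSup_le (fun i => measureReal_mono (h i)) measureReal_nonneg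

lemma measure_inter_le_add_measure_symmDiff (s t E : Set X) :
    μ (s ∩ E) ≤ μ (t ∩ E) + μ (s ∆ t) := by
  refine (measure_mono fun x hx => ?_).trans (measure_union_le (t ∩ E) (s ∆ t))
  by_cases hxt : x ∈ t
  · exact Or.inl ⟨hxt, hx.2⟩
  · exact Or.inr (Or.inl ⟨hx.1, hxt⟩)

lemma measure_inter_eq_zero_of_forall_partitionDist_lt [Finite ι] [IsFiniteMeasure μ]
    {E : Set X} {i : ι}
    (h : ∀ ε > (0 : ℝ), ∃ B', μ (B' i ∩ E) = 0 ∧ partitionDist μ B B' < ε) :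
    μ (B i ∩ E) = 0 := by
  refine (measureReal_eq_zero_iff).1 <|
    le_antisymm (le_of_forall_pos_lt_add fun ε hε => ?_) measureReal_nonneg
  obtain ⟨B', hB'E, hB'⟩ := h ε hε
  calc μ.real (B i ∩ E) ≤ μ.real (B i ∆ B' i) :=
        ENNReal.toReal_mono (measure_ne_top _ _) <| by
          simpa [hB'E] using measure_inter_le_add_measure_symmDiff (μ := μ) (B i) (B' i) E
    _ ≤ partitionDist μ B B' := measureReal_symmDiff_le_partitionDist B B' i
    _ < 0 + ε := by rwa [zero_add]

lemma exists_measure_inter_ne_zero [Countable ι] (hB : ⋃ i, B i = univ)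
    {E : Set X} (hE : μ E ≠ 0) : ∃ i, μ (B i ∩ E) ≠ 0 := by
  rw [← univ_inter E, ← hB, iUnion_inter] at hE
  exact (exists_measure_pos_of_not_measure_iUnion_null hE).imp fun _ h => h.ne'

lemma IsPartitionWithMeasures.exists_near_measure_inter_ne_zero [DecidableEq ι]
    [IsFiniteMeasure μ]
    (hdiv : ∀ (s : Set X) (r : ℝ≥0∞), MeasurableSet s → r ≤ μ s →
      ∃ t ⊆ s, MeasurableSet t ∧ μ t = r)
    {m : ι → ℝ≥0∞} (hB : IsPartitionWithMeasures μ m B) {E : Set X}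
    (hE : MeasurableSet E) {i j : ι} (hij : i ≠ j) (hj : μ (B j ∩ E) ≠ 0)
    (hi : μ (B i \ E) ≠ 0) {ε : ℝ} (hε : 0 < ε) :
    ∃ B', IsPartitionWithMeasures μ m B' ∧ partitionDist μ B B' < ε ∧ μ (B' i ∩ E) ≠ 0 := by
  set r := min (min (μ (B j ∩ E)) (μ (B i \ E))) (ENNReal.ofReal (ε / 4))
  have hr : 0 < r := lt_min (lt_min (pos_iff_ne_zero.2 hj) (pos_iff_ne_zero.2 hi))
    (ENNReal.ofReal_pos.2 (by linarith))
  have hrε : r.toReal ≤ ε / 4 := ENNReal.toReal_le_of_le_ofReal (by linarith) (min_le_right _ _)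
  obtain ⟨S, hSjE, hS, hSr⟩ := hdiv (B j ∩ E) r ((hB.1 j).inter hE)
    ((min_le_left _ _).trans (min_le_left _ _))
  obtain ⟨T, hTiE, hT, hTr⟩ := hdiv (B i \ E) r ((hB.1 i).diff hE)
    ((min_le_left _ _).trans (min_le_right _ _))
  have hSj : S ⊆ B j := hSjE.trans inter_subset_left
  have hTi : T ⊆ B i := hTiE.trans sdiff_subset
  have hBij : Disjoint (B i) (B j) := hB.2.1 hij
  have hiU : B i ∩ (S ∪ T) = T := by
    rw [inter_union_distrib_left, (hBij.mono_right hSj).inter_eq, inter_eq_right.2 hTi,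
      empty_union]
  have hjU : B j ∩ (S ∪ T) = S := by
    rw [inter_union_distrib_left, (hBij.symm.mono_right hTi).inter_eq, inter_eq_right.2 hSj,
      union_empty]
  have hSwap : μ (B i ∩ (S ∪ T)) = μ (B j ∩ (S ∪ T)) := by rw [hiU, hjU, hSr, hTr]
  refine ⟨_, hB.permuteOn (Equiv.swap i j) (hS.union hT) (measure_swap_inter_eq hSwap), ?_, ?_⟩
  · calc _ ≤ μ.real (S ∪ T) := partitionDist_le_of_symmDiff_subset symmDiff_permuteOn_subset
      _ ≤ μ.real S + μ.real T := measureReal_union_le S T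
      _ < ε := by rw [measureReal_def, measureReal_def, hSr, hTr]; linarith
  · have hS_sub : S ⊆ _root_.permuteOn B (Equiv.swap i j) (S ∪ T) i ∩ E := fun x hx =>
      ⟨Or.inl ⟨by simpa using hSj hx, Or.inl hx⟩, (hSjE hx).2⟩
    exact (hr.trans_le (hSr ▸ measure_mono hS_sub)).ne'

end

theorem avoiding_set_nowhere_dense_general {X : Type*} [MeasurableSpace X] (μ : Measure X)
    [IsProbabilityMeasure μ]
    (hdiv : ∀ (s : Set X) (r : ENNReal), MeasurableSet s → r ≤ μ s →
      ∃ t ⊆ s, MeasurableSet t ∧ μ t = r)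
    (k : ℕ) (A : Fin k → Set X)
    (hApos : ∀ i, 0 < μ (A i))
    (E : Set X) (hEmeas : MeasurableSet E) (hEpos : 0 < μ E)
    (i₀ : Fin k) :
    -- the set is closed in the space of partitions:
    (∀ B : Fin k → Set X,
      ((∀ i, MeasurableSet (B i)) ∧ Pairwise (Function.onFun Disjoint B) ∧
        (⋃ i, B i = Set.univ) ∧ (∀ i, μ (B i) = μ (A i))) →
      (∀ ε > (0 : ℝ), ∃ B' : Fin k → Set X,
        ((∀ i, MeasurableSet (B' i)) ∧ Pairwise (Function.onFun Disjoint B') ∧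
          (⋃ i, B' i = Set.univ) ∧ (∀ i, μ (B' i) = μ (A i))) ∧
        μ (B' i₀ ∩ E) = 0 ∧ (⨆ i, (μ (symmDiff (B i) (B' i))).toReal) < ε) →
      μ (B i₀ ∩ E) = 0) ∧
    -- and has empty interior (so, being closed, it is nowhere dense):
    (∀ B : Fin k → Set X,
      ((∀ i, MeasurableSet (B i)) ∧ Pairwise (Function.onFun Disjoint B) ∧
        (⋃ i, B i = Set.univ) ∧ (∀ i, μ (B i) = μ (A i))) →
      ∀ ε > (0 : ℝ), ∃ B' : Fin k → Set X,
        ((∀ i, MeasurableSet (B' i)) ∧ Pairwise (Function.onFun Disjoint B') ∧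
          (⋃ i, B' i = Set.univ) ∧ (∀ i, μ (B' i) = μ (A i))) ∧
        (⨆ i, (μ (symmDiff (B i) (B' i))).toReal) < ε ∧
        μ (B' i₀ ∩ E) ≠ 0) := by
  refine ⟨fun B _ happrox => measure_inter_eq_zero_of_forall_partitionDist_lt fun ε hε =>
    (happrox ε hε).imp fun _ h => h.2, fun B hB ε hε => ?_⟩
  change IsPartitionWithMeasures μ (fun i => μ (A i)) B at hB
  by_cases hBE : μ (B i₀ ∩ E) = 0
  · obtain ⟨j, hj⟩ := exists_measure_inter_ne_zero hB.2.2.1 hEpos.ne'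
    have hji : j ≠ i₀ := by rintro rfl; exact hj hBE
    have hi₀ : μ (B i₀ \ E) ≠ 0 := by
      rw [← sdiff_self_inter, measure_sdiff_null hBE, hB.2.2.2]
      exact (hApos i₀).ne'
    exact hB.exists_near_measure_inter_ne_zero hdiv hEmeas hji.symm hj hi₀ hε
  · exact ⟨B, hB, by simpa [partitionDist_self] using hε, hBE⟩

/-- In a standard probability space, among partitions `(B i)` with prescribed measures
`μ(B i) = μ(A i)`, the set of partitions with `μ(B i₀ ∩ E) = 0` (for a fixed positive
measure set `E` and index `i₀`) is closed with empty interior (hence nowhere dense)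
with respect to the metric `d(B, B') = max_i μ(B i Δ B' i)`. -/
theorem avoiding_set_nowhere_dense {X : Type*} [MeasurableSpace X] (μ : Measure X)
    [IsProbabilityMeasure μ]
    (hdiv : ∀ (s : Set X) (r : ENNReal), MeasurableSet s → r ≤ μ s →
      ∃ t ⊆ s, MeasurableSet t ∧ μ t = r)
    (k : ℕ) (A : Fin k → Set X) (hAmeas : ∀ i, MeasurableSet (A i))
    (hAdisj : Pairwise (Function.onFun Disjoint A)) (hAcover : ⋃ i, A i = Set.univ)
    (hApos : ∀ i, 0 < μ (A i))
    (E : Set X) (hEmeas : MeasurableSet E) (hEpos : 0 < μ E)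
    (i₀ : Fin k) :
    -- the set is closed in the space of partitions:
    (∀ B : Fin k → Set X,
      ((∀ i, MeasurableSet (B i)) ∧ Pairwise (Function.onFun Disjoint B) ∧
        (⋃ i, B i = Set.univ) ∧ (∀ i, μ (B i) = μ (A i))) →
      (∀ ε > (0 : ℝ), ∃ B' : Fin k → Set X,
        ((∀ i, MeasurableSet (B' i)) ∧ Pairwise (Function.onFun Disjoint B') ∧
          (⋃ i, B' i = Set.univ) ∧ (∀ i, μ (B' i) = μ (A i))) ∧
        μ (B' i₀ ∩ E) = 0 ∧ (⨆ i, (μ (symmDiff (B i) (B' i))).toReal) < ε) →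
      μ (B i₀ ∩ E) = 0) ∧
    -- and has empty interior (so, being closed, it is nowhere dense):
    (∀ B : Fin k → Set X,
      ((∀ i, MeasurableSet (B i)) ∧ Pairwise (Function.onFun Disjoint B) ∧
        (⋃ i, B i = Set.univ) ∧ (∀ i, μ (B i) = μ (A i))) →
      ∀ ε > (0 : ℝ), ∃ B' : Fin k → Set X,
        ((∀ i, MeasurableSet (B' i)) ∧ Pairwise (Function.onFun Disjoint B') ∧
          (⋃ i, B' i = Set.univ) ∧ (∀ i, μ (B' i) = μ (A i))) ∧
        (⨆ i, (μ (symmDiff (B i) (B' i))).toReal) < ε ∧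
        μ (B' i₀ ∩ E) ≠ 0) :=
  avoiding_set_nowhere_dense_general μ hdiv k A hApos E hEmeas hEpos i₀
end
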